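/- arXiv:1902.08822 — 3 statements merged into one kernel-verified Lean document; each statement's English description precedes it below -/
import Mathlib

section
/- Let 1 ≤ k < N be an integer and let Ω ⊂ ℝ^N be a bounded convex domain such that, for some δ > 0, the k-dimensional ball B_{k,δ} = {x = (x₁,…,x_k,0,…,0) ∈ ℝ^N : |x| < δ} is contained in ∂Ω. Then there exists no real-valued lower semicontinuous function u on closure(Ω) that is a viscosity supersolution of 𝒫ₖ⁺(D²u) = −1 in Ω, vanishes pointwise on ∂Ω, and satisfies lim_{x→0} u(x) = 0. -/
noncomputable section

open Metric Set Filter Bornology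
open scoped RealInnerProductSpace

/-- `ℝ^N` with the Euclidean structure. -/
abbrev Euc (N : ℕ) := EuclideanSpace ℝ (Fin N)

/-- The sum of the `k` largest values (with multiplicity) of `v : Fin N → ℝ`. -/
def sumTopK (N k : ℕ) (v : Fin N → ℝ) : ℝ :=
  sSup {t : ℝ | ∃ s : Finset (Fin N), s.card = k ∧ t = ∑ i ∈ s, v i}

/-- The sum of the `k` smallest values (with multiplicity) of `v : Fin N → ℝ`. -/
def sumBotK (N k : ℕ) (v : Fin N → ℝ) : ℝ :=
  sInf {t : ℝ | ∃ s : Finset (Fin N), s.card = k ∧ t = ∑ i ∈ s, v i}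

/-- `𝒫ₖ⁺(X)`: the sum of the `k` largest eigenvalues of the symmetric matrix `X`. -/
def Pkp (N k : ℕ) (X : Matrix (Fin N) (Fin N) ℝ) : ℝ :=
  if h : X.IsHermitian then sumTopK N k h.eigenvalues else 0

/-- `𝒫ₖ⁻(X)`: the sum of the `k` smallest eigenvalues of the symmetric matrix `X`. -/
def Pkm (N k : ℕ) (X : Matrix (Fin N) (Fin N) ℝ) : ℝ :=
  if h : X.IsHermitian then sumBotK N k h.eigenvalues else 0

/-- The Hessian matrix of `φ : ℝ^N → ℝ` at `x`. -/
def hess {N : ℕ} (φ : Euc N → ℝ) (x : Euc N) : Matrix (Fin N) (Fin N) ℝ :=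
  fun i j => iteratedFDeriv ℝ 2 φ x ![EuclideanSpace.single i 1, EuclideanSpace.single j 1]

/-- `u` is a viscosity supersolution of `G(x, u(x), Du, D²u) = 0` in the open set `Ω`,
where the sign convention is that supersolutions satisfy `G ≤ 0` (degenerate
ellipticity in the second-order slot being monotone increasing). -/
def SuperSol {N : ℕ} (Ω : Set (Euc N))
    (G : Euc N → ℝ → Euc N → Matrix (Fin N) (Fin N) ℝ → ℝ) (u : Euc N → ℝ) : Prop :=
  ∀ x₀ ∈ Ω, ∀ φ : Euc N → ℝ, ContDiffAt ℝ 2 φ x₀ →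
    IsLocalMinOn (fun x => u x - φ x) Ω x₀ →
    G x₀ (u x₀) (gradient φ x₀) (hess φ x₀) ≤ 0

/-- `u` is a viscosity subsolution of `G(x, u(x), Du, D²u) = 0` in the open set `Ω`. -/
def SubSol {N : ℕ} (Ω : Set (Euc N))
    (G : Euc N → ℝ → Euc N → Matrix (Fin N) (Fin N) ℝ → ℝ) (u : Euc N → ℝ) : Prop :=
  ∀ x₀ ∈ Ω, ∀ φ : Euc N → ℝ, ContDiffAt ℝ 2 φ x₀ →
    IsLocalMaxOn (fun x => u x - φ x) Ω x₀ →
    0 ≤ G x₀ (u x₀) (gradient φ x₀) (hess φ x₀)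

/-- A set `s` is strictly convex in the sense of the paper:
`(1-t)x + ty ∈ s` for all distinct `x, y ∈ closure s` and `0 < t < 1`. -/
def StrictlyConvexSet {E : Type*} [NormedAddCommGroup E] [NormedSpace ℝ E] (s : Set E) : Prop :=
  ∀ x ∈ closure s, ∀ y ∈ closure s, x ≠ y → ∀ t : ℝ, 0 < t → t < 1 → (1 - t) • x + t • y ∈ s

/-- `C ⊆ ℝ^N` is a cylinder of class `C_j`: `C = ω × ℝ^{N-j}` with `ω ⊆ ℝ^j` a bounded
strictly convex open set. -/
def IsCylinder (N j : ℕ) (C : Set (Euc N)) : Prop :=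
  ∃ (hj : j ≤ N) (ω : Set (EuclideanSpace ℝ (Fin j))),
    IsOpen ω ∧ IsBounded ω ∧ ω.Nonempty ∧ StrictlyConvexSet ω ∧
    C = {x : Euc N | (WithLp.toLp 2 (fun i : Fin j => x (Fin.castLE hj i)) : EuclideanSpace ℝ (Fin j)) ∈ ω}

/-- `Ω` belongs to the class `𝒞_j`: for every boundary point `x` there are an orthogonal
transformation `O` and a cylinder `C ∈ C_j` with `Ω ⊆ OC` and `x ∈ ∂(OC)`. -/
def MemCclass (N j : ℕ) (Ω : Set (Euc N)) : Prop :=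
  ∀ x ∈ frontier Ω, ∃ (O : Euc N ≃ₗᵢ[ℝ] Euc N) (C : Set (Euc N)),
    IsCylinder N j C ∧ Ω ⊆ (⇑O) '' C ∧ x ∈ frontier ((⇑O) '' C)

/-- `d(Ω)`: the largest dimension of a flat piece of the boundary of `Ω`. -/
def flatDim (N : ℕ) (Ω : Set (Euc N)) : ℕ :=
  sSup {m : ℕ | ∃ x ∈ frontier Ω, ∃ V : Submodule ℝ (Euc N), Module.finrank ℝ V = m ∧
    ∃ δ : ℝ, 0 < δ ∧ (fun v => x + v) '' ((V : Set (Euc N)) ∩ ball 0 δ) ⊆ frontier Ω}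

/-- The generalized principal eigenvalue `μₖ⁺` for `𝒫ₖ⁺(D²·) + b |D·|` on `Ω`. -/
def mukplus (N k : ℕ) (b : ℝ) (Ω : Set (Euc N)) : ℝ :=
  sSup {μ : ℝ | ∃ φ : Euc N → ℝ, LowerSemicontinuousOn φ Ω ∧ (∀ x ∈ Ω, 0 < φ x) ∧
    SuperSol Ω (fun _ r p X => Pkp N k X + b * ‖p‖ + μ * r) φ}

/-- `g` is locally Lipschitz in the open set `Ω`. -/
def LocLipOn {N : ℕ} (Ω : Set (Euc N)) (g : Euc N → ℝ) : Prop :=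
  ∀ x ∈ Ω, ∃ (K : NNReal) (ε : ℝ), 0 < ε ∧ ball x ε ⊆ Ω ∧ LipschitzOnWith K g (ball x ε)

/-! A minimum principle gives `u ≥ 0` on `closure Ω`. Pick a ball `ball y₀ d ⊆ Ω`. Segments from
the flat piece to this ball sweep out, around each `τ • y₀` with `0 < τ < 1/2`, a cylinder of
radius `δ / 4` in the first `k` coordinates and `τ d / 2` in the others, contained in `Ω` by
convexity. Touching `u` from below on this cylinder by the concave paraboloid
`-(a |x' - c'|² + ε⁻¹ |x'' - c''|²)`, whose Hessian has `𝒫ₖ⁺ = -2ka > -1`, the minimum cannot be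
interior; with `ε` small it cannot lie on the top or bottom either, so it lies on the lateral
boundary and `u (τ • y₀) ≥ a (δ / 4)²` for all such `τ`, contradicting `u → 0` at `0`. -/

open scoped Topology

theorem Multiset.exists_equiv_of_map_univ_eq {α γ : Type*} [Fintype α] [DecidableEq γ]
    {f g : α → γ} (h : Multiset.map f Finset.univ.val = Multiset.map g Finset.univ.val) :
    ∃ σ : α ≃ α, f = g ∘ σ := by
  have hcard : ∀ c, Fintype.card {a // f a = c} = Fintype.card {a // g a = c} := by
    intro c
    have := congrArg (Multiset.count c) h
    simp only [Multiset.count_map] at this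
    simp only [Fintype.card_subtype, eq_comm (b := c)]
    exact this
  exact ⟨Equiv.ofFiberEquiv fun c => Fintype.equivOfCardEq (hcard c),
    funext fun a => (Equiv.ofFiberEquiv_map _ a).symm⟩

theorem Matrix.exists_equiv_eigenvalues_diagonal {n : Type*} [Fintype n] [DecidableEq n]
    (d : n → ℝ) : ∃ σ : n ≃ n, (Matrix.isHermitian_diagonal d).eigenvalues = d ∘ σ := by
  apply Multiset.exists_equiv_of_map_univ_eq
  have := (Matrix.isHermitian_diagonal d).roots_charpoly_eq_eigenvalues
  rw [Matrix.charpoly_diagonal, Polynomial.roots_prod _ _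
    (by simp [Finset.prod_ne_zero_iff, Polynomial.X_sub_C_ne_zero])] at this
  simpa using this.symm

theorem sum_le_sumTopK {N k : ℕ} (v : Fin N → ℝ) {s : Finset (Fin N)} (hs : s.card = k) :
    ∑ i ∈ s, v i ≤ sumTopK N k v := by
  refine le_csSup (((Set.finite_range fun s : Finset (Fin N) => ∑ i ∈ s, v i).subset ?_).bddAbove)
    ⟨s, hs, rfl⟩
  rintro _ ⟨s, -, rfl⟩
  exact ⟨s, rfl⟩

theorem sum_le_Pkp_diagonal {N k : ℕ} (d : Fin N → ℝ) {s : Finset (Fin N)} (hs : s.card = k) :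
    ∑ i ∈ s, d i ≤ Pkp N k (Matrix.diagonal d) := by
  obtain ⟨σ, hσ⟩ := Matrix.exists_equiv_eigenvalues_diagonal d
  rw [Pkp, dif_pos (Matrix.isHermitian_diagonal d), hσ]
  calc ∑ i ∈ s, d i = ∑ i ∈ s.map σ.symm.toEmbedding, (d ∘ σ) i := by simp
    _ ≤ _ := sum_le_sumTopK _ (by simpa using hs)

section

variable {N : ℕ}

def diagQuadratic (w : Fin N → ℝ) (c x : Euc N) : ℝ :=
  ∑ m, w m * (x m - c m) ^ 2

@[simp]
theorem diagQuadratic_self (w : Fin N → ℝ) (c : Euc N) : diagQuadratic w c c = 0 := by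
  simp [diagQuadratic]

def diagBilin (w : Fin N → ℝ) : Euc N →L[ℝ] Euc N →L[ℝ] ℝ :=
  ∑ m, (2 * w m) • (EuclideanSpace.proj m).smulRight (EuclideanSpace.proj m : Euc N →L[ℝ] ℝ)

theorem hasFDerivAt_diagQuadratic (w : Fin N → ℝ) (c x : Euc N) :
    HasFDerivAt (diagQuadratic w c) (diagBilin w (x - c)) x := by
  have hm : ∀ m : Fin N, HasFDerivAt (fun x : Euc N => w m * (x m - c m) ^ 2)
      ((2 * w m * (x m - c m)) • (EuclideanSpace.proj m : Euc N →L[ℝ] ℝ)) x := by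
    intro m
    refine ((((EuclideanSpace.proj m : Euc N →L[ℝ] ℝ).hasFDerivAt (x := x)).sub_const
      (c m)).pow 2 |>.const_mul (w m)).congr_fderiv ?_
    ext v
    simp
    ring
  refine (HasFDerivAt.fun_sum fun m _ => hm m).congr_fderiv ?_
  ext v
  simp [diagBilin, mul_assoc]

theorem contDiff_diagQuadratic (w : Fin N → ℝ) (c : Euc N) :
    ContDiff ℝ 2 (diagQuadratic w c) :=
  ContDiff.sum fun m _ => contDiff_const.mul
    (((EuclideanSpace.proj m : Euc N →L[ℝ] ℝ).contDiff.sub contDiff_const).pow 2)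

theorem hess_diagQuadratic (w : Fin N → ℝ) (c x : Euc N) :
    hess (diagQuadratic w c) x = Matrix.diagonal fun i => 2 * w i := by
  have hfd : fderiv ℝ (diagQuadratic w c) = fun y => diagBilin w (y - c) :=
    funext fun y => (hasFDerivAt_diagQuadratic w c y).fderiv
  have h2 : HasFDerivAt (fun y => diagBilin w (y - c)) (diagBilin w) x := by
    simpa using (diagBilin w).hasFDerivAt.sub_const (diagBilin w c)
  ext i j
  rw [hess, iteratedFDeriv_two_apply, hfd, h2.fderiv]
  simp [diagBilin, Matrix.diagonal_apply]

def headProj (k : ℕ) (x : Euc N) : Euc N :=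
  WithLp.toLp 2 fun i => if (i : ℕ) < k then x i else 0

@[fun_prop]
theorem continuous_headProj (k : ℕ) : Continuous (headProj k : Euc N → Euc N) :=
  (PiLp.continuous_toLp 2 _).comp <| continuous_pi fun i => by
    split_ifs
    · exact PiLp.continuous_apply 2 _ i
    · exact continuous_const

@[simp]
theorem headProj_zero (k : ℕ) : headProj k (0 : Euc N) = 0 := by
  ext i; simp [headProj]

theorem diagQuadratic_ite (k : ℕ) (a b : ℝ) (c x : Euc N) :
    diagQuadratic (fun i => if (i : ℕ) < k then a else b) c x
      = a * ‖headProj k (x - c)‖ ^ 2 + b * ‖x - c - headProj k (x - c)‖ ^ 2 := by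
  simp only [diagQuadratic, EuclideanSpace.norm_sq_eq, Finset.mul_sum, ← Finset.sum_add_distrib]
  refine Finset.sum_congr rfl fun i _ => ?_
  by_cases hi : (i : ℕ) < k <;> simp [headProj, hi]

def cylinder (k : ℕ) (c : Euc N) (r ρ : ℝ) : Set (Euc N) :=
  {x | ‖headProj k (x - c)‖ ≤ r ∧ ‖x - c - headProj k (x - c)‖ ≤ ρ}

theorem center_mem_cylinder (k : ℕ) (c : Euc N) {r ρ : ℝ} (hr : 0 ≤ r) (hρ : 0 ≤ ρ) :
    c ∈ cylinder k c r ρ := by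
  simp [cylinder, hr, hρ]

theorem isCompact_cylinder (k : ℕ) (c : Euc N) (r ρ : ℝ) :
    IsCompact (cylinder k c r ρ) := by
  refine (ProperSpace.isCompact_closedBall c (r + ρ)).of_isClosed_subset ?_ ?_
  · exact (isClosed_le (by fun_prop : Continuous fun x => ‖headProj k (x - c)‖)
      continuous_const).inter (isClosed_le
        (by fun_prop : Continuous fun x => ‖x - c - headProj k (x - c)‖) continuous_const)
  · rintro x ⟨hx₁, hx₂⟩
    rw [mem_closedBall, dist_eq_norm]
    calc ‖x - c‖ = ‖headProj k (x - c) + (x - c - headProj k (x - c))‖ := by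
          rw [add_sub_cancel]
      _ ≤ r + ρ := (norm_add_le _ _).trans (add_le_add hx₁ hx₂)

theorem cylinder_mem_nhds {k : ℕ} {c p : Euc N} {r ρ : ℝ}
    (hp : ‖headProj k (p - c)‖ < r ∧ ‖p - c - headProj k (p - c)‖ < ρ) :
    cylinder k c r ρ ∈ nhds p := by
  have hopen : IsOpen {x | ‖headProj k (x - c)‖ < r ∧ ‖x - c - headProj k (x - c)‖ < ρ} :=
    (isOpen_lt (by fun_prop : Continuous fun x => ‖headProj k (x - c)‖)
      continuous_const).inter (isOpen_lt
        (by fun_prop : Continuous fun x => ‖x - c - headProj k (x - c)‖) continuous_const)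
  exact Filter.mem_of_superset (hopen.mem_nhds hp) fun x hx => ⟨hx.1.le, hx.2.le⟩

theorem cylinder_subset {k : ℕ} {Ω : Set (Euc N)} (hΩo : IsOpen Ω) (hΩc : Convex ℝ Ω)
    {δ d τ r ρ : ℝ} {y₀ : Euc N}
    (hflat : {x : Euc N | (∀ i : Fin N, k ≤ (i : ℕ) → x i = 0) ∧ ‖x‖ < δ} ⊆ closure Ω)
    (hball : ball y₀ d ⊆ Ω) (hτ₀ : 0 < τ) (hτ₁ : τ < 1) (hr : r < (1 - τ) * δ)
    (hρ : ρ < τ * d) :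
    cylinder k (τ • y₀) r ρ ⊆ Ω := by
  rintro x ⟨hx₁, hx₂⟩
  set v := x - τ • y₀
  have hτ₁' : 0 < 1 - τ := sub_pos.2 hτ₁
  -- `x` is a convex combination of a point of the flat piece and a point of the ball
  have hz : (1 - τ)⁻¹ • headProj k v ∈ closure Ω := by
    refine hflat ⟨fun i hi => by simp [headProj, not_lt.2 hi], ?_⟩
    rw [norm_smul, Real.norm_of_nonneg (inv_nonneg.2 hτ₁'.le), inv_mul_lt_iff₀ hτ₁']
    linarith
  have hy : y₀ + τ⁻¹ • (v - headProj k v) ∈ interior Ω := by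
    rw [hΩo.interior_eq]
    refine hball ?_
    rw [mem_ball, dist_eq_norm, add_sub_cancel_left, norm_smul,
      Real.norm_of_nonneg (inv_nonneg.2 hτ₀.le), inv_mul_lt_iff₀ hτ₀]
    linarith
  have hx : x = (1 - τ) • ((1 - τ)⁻¹ • headProj k v) + τ • (y₀ + τ⁻¹ • (v - headProj k v)) := by
    rw [smul_smul, mul_inv_cancel₀ hτ₁'.ne', one_smul, smul_add, smul_smul,
      mul_inv_cancel₀ hτ₀.ne', one_smul]
    simp only [v]
    abel
  rw [hx, ← hΩo.interior_eq]
  exact hΩc.combo_closure_interior_mem_interior hz hy hτ₁'.le hτ₀ (by ring)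

end

section SuperSol

variable {N k : ℕ} {Ω : Set (Euc N)} {u : Euc N → ℝ}

theorem SuperSol.not_isLocalMinOn_sub_diagQuadratic
    (hsuper : SuperSol Ω (fun _ _ _ X => Pkp N k X + 1) u) {s : Finset (Fin N)} (hs : s.card = k)
    {w : Fin N → ℝ} (hw : -1 < ∑ i ∈ s, 2 * w i) (c : Euc N) {p : Euc N} (hp : p ∈ Ω) :
    ¬ IsLocalMinOn (fun x => u x - diagQuadratic w c x) Ω p := fun hmin => by
  have h := hsuper p hp _ (contDiff_diagQuadratic w c).contDiffAt hmin
  dsimp only at h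
  rw [hess_diagQuadratic] at h
  linarith [sum_le_Pkp_diagonal (fun i => 2 * w i) hs]

theorem SuperSol.nonneg_of_nonneg_on_frontier (hsuper : SuperSol Ω (fun _ _ _ X => Pkp N k X + 1) u)
    (hk : k ≤ N) (hΩo : IsOpen Ω) (hΩb : IsBounded Ω)
    (hlsc : LowerSemicontinuousOn u (closure Ω)) (hbdry : ∀ x ∈ frontier Ω, 0 ≤ u x) :
    ∀ x ∈ closure Ω, 0 ≤ u x := by
  intro x hx
  obtain ⟨x₀, hx₀, hmin⟩ := hlsc.exists_isMinOn ⟨x, hx⟩ hΩb.isCompact_closure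
  suffices x₀ ∈ frontier Ω from (hbdry x₀ this).trans (hmin hx)
  by_contra hx₀f
  have hx₀Ω : x₀ ∈ Ω := by
    rw [← hΩo.interior_eq, ← closure_sdiff_frontier]
    exact ⟨hx₀, hx₀f⟩
  obtain ⟨s, -, hs⟩ := Finset.exists_subset_card_eq (s := (Finset.univ : Finset (Fin N)))
    (by simpa using hk)
  refine hsuper.not_isLocalMinOn_sub_diagQuadratic hs (w := 0) (by simp) 0 hx₀Ω ?_
  simpa [diagQuadratic] using (hmin.on_subset subset_closure).localize

theorem SuperSol.mul_sq_le_of_cylinder_subset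
    (hsuper : SuperSol Ω (fun _ _ _ X => Pkp N k X + 1) u) (hk : k ≤ N)
    (hlsc : LowerSemicontinuousOn u Ω) (hu : ∀ x ∈ Ω, 0 ≤ u x) {c : Euc N} {r ρ a : ℝ}
    (hr : 0 ≤ r) (hρ : 0 < ρ) (ha : 0 ≤ a) (hka : 2 * k * a < 1) (hS : cylinder k c r ρ ⊆ Ω) :
    a * r ^ 2 ≤ u c := by
  have hcS := center_mem_cylinder k c hr hρ.le
  have huc := hu c (hS hcS)
  -- steep enough in the last `N - k` directions to keep the minimum off the top and bottom
  set ε := ρ ^ 2 / (u c + 1)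
  have hε : 0 < ε := by positivity
  set φ := diagQuadratic (fun i => if (i : ℕ) < k then -a else -ε⁻¹) c
  have hφ : ∀ x, -φ x = a * ‖headProj k (x - c)‖ ^ 2 + ε⁻¹ * ‖x - c - headProj k (x - c)‖ ^ 2 := by
    intro x
    simp only [φ, diagQuadratic_ite]
    ring
  have hlsc' : LowerSemicontinuousOn (fun x => u x - φ x) (cylinder k c r ρ) :=
    (hlsc.mono hS).add
      ((contDiff_diagQuadratic _ c).continuous.neg.lowerSemicontinuous.lowerSemicontinuousOn _)
  obtain ⟨p, hpS, hpmin⟩ := hlsc'.exists_isMinOn ⟨c, hcS⟩ (isCompact_cylinder k c r ρ)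
  have hpc : u p - φ p ≤ u c := by simpa [φ] using hpmin hcS
  have hup := hu p (hS hpS)
  by_cases hint : ‖headProj k (p - c)‖ < r ∧ ‖p - c - headProj k (p - c)‖ < ρ
  · refine absurd ((hpmin.isLocalMin (cylinder_mem_nhds hint)).on Ω)
      (hsuper.not_isLocalMinOn_sub_diagQuadratic (s := {i : Fin N | (i : ℕ) < k}) ?_ ?_ c (hS hpS))
    · rw [Fin.card_filter_val_lt, min_eq_right hk]
    · rw [Finset.sum_congr rfl fun i hi => by rw [if_pos (Finset.mem_filter.1 hi).2],
        Finset.sum_const, Fin.card_filter_val_lt, min_eq_right hk, nsmul_eq_mul]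
      linarith
  rcases not_and_or.1 hint with h | h
  · calc a * r ^ 2 ≤ a * ‖headProj k (p - c)‖ ^ 2 := by gcongr; linarith
      _ ≤ u p - φ p := by
        linarith [hφ p, mul_nonneg (inv_nonneg.2 hε.le) (sq_nonneg ‖p - c - headProj k (p - c)‖)]
      _ ≤ u c := hpc
  · have : u c + 1 ≤ u p - φ p := calc
      u c + 1 = ε⁻¹ * ρ ^ 2 := by simp only [ε, inv_div]; field_simp
      _ ≤ ε⁻¹ * ‖p - c - headProj k (p - c)‖ ^ 2 := by gcongr; linarith
      _ ≤ u p - φ p := by linarith [hφ p, mul_nonneg ha (sq_nonneg ‖headProj k (p - c)‖)]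
    linarith

end SuperSol

theorem no_supersolution_of_flat_boundary_ball_general {N k : ℕ} (hkN : k < N)
    (δ : ℝ) (hδ : 0 < δ)
    (Ω : Set (Euc N)) (hΩo : IsOpen Ω) (hΩb : IsBounded Ω) (hΩne : Ω.Nonempty)
    (hΩc : Convex ℝ Ω)
    (hflat : {x : Euc N | (∀ i : Fin N, k ≤ (i : ℕ) → x i = 0) ∧ ‖x‖ < δ} ⊆ frontier Ω) :
    ¬ ∃ u : Euc N → ℝ,
        LowerSemicontinuousOn u (closure Ω) ∧
        SuperSol Ω (fun _ _ _ X => Pkp N k X + 1) u ∧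
        (∀ x ∈ frontier Ω, u x = 0) ∧
        Filter.Tendsto u (nhdsWithin 0 Ω) (nhds 0) := by
  rintro ⟨u, hlsc, hsuper, hbdry, hlim⟩
  have hu := hsuper.nonneg_of_nonneg_on_frontier hkN.le hΩo hΩb hlsc fun x hx => (hbdry x hx).ge
  obtain ⟨y₀, hy₀⟩ := hΩne
  obtain ⟨d, hd, hball⟩ := isOpen_iff.1 hΩo y₀ hy₀
  set a : ℝ := 1 / (2 * (k + 1))
  have hka : 2 * k * a < 1 := by
    rw [mul_one_div, div_lt_one (by positivity)]
    linarith
  have hcyl : ∀ τ ∈ Ioo (0 : ℝ) (1 / 2), cylinder k (τ • y₀) (δ / 4) (τ * d / 2) ⊆ Ω :=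
    fun τ hτ => cylinder_subset hΩo hΩc (hflat.trans frontier_subset_closure) hball hτ.1
      (by linarith [hτ.2]) (by nlinarith [hτ.2]) (by nlinarith [hτ.1])
  have hbound : ∀ τ ∈ Ioo (0 : ℝ) (1 / 2), a * (δ / 4) ^ 2 ≤ u (τ • y₀) := fun τ hτ =>
    hsuper.mul_sq_le_of_cylinder_subset hkN.le (hlsc.mono subset_closure)
      (fun x hx => hu x (subset_closure hx)) (by positivity) (by nlinarith [hτ.1])
      (by positivity) hka (hcyl τ hτ)
  have hmem : ∀ τ ∈ Ioo (0 : ℝ) (1 / 2), τ • y₀ ∈ Ω := fun τ hτ =>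
    hcyl τ hτ (center_mem_cylinder k _ (by positivity) (by nlinarith [hτ.1]))
  have hsmall : Ioo (0 : ℝ) (1 / 2) ∈ 𝓝[>] 0 := Ioo_mem_nhdsGT (by norm_num)
  have hseg : Tendsto (fun τ : ℝ => τ • y₀) (𝓝[>] 0) (𝓝[Ω] 0) :=
    tendsto_nhdsWithin_of_tendsto_nhds_of_eventually_within _
      (((continuous_id.smul continuous_const).tendsto' 0 0 (zero_smul ℝ y₀)).mono_left
        nhdsWithin_le_nhds) (Filter.mem_of_superset hsmall hmem)
  have hlim_ge := ge_of_tendsto (hlim.comp hseg) (Filter.mem_of_superset hsmall hbound)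
  have : 0 < a * (δ / 4) ^ 2 := by positivity
  linarith

/-- **Proposition (`non existence`).** If a bounded convex domain `Ω ⊆ ℝ^N` has a flat
`k`-dimensional ball `B_{k,δ}` in its boundary, then there is no lower semicontinuous
viscosity supersolution of `𝒫ₖ⁺(D²u) = -1` in `Ω` vanishing on `∂Ω` with `lim_{x→0} u(x) = 0`. -/
theorem no_supersolution_of_flat_boundary_ball {N k : ℕ} (hk1 : 1 ≤ k) (hkN : k < N)
    (δ : ℝ) (hδ : 0 < δ)
    (Ω : Set (Euc N)) (hΩo : IsOpen Ω) (hΩb : IsBounded Ω) (hΩne : Ω.Nonempty)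
    (hΩc : Convex ℝ Ω)
    (hflat : {x : Euc N | (∀ i : Fin N, k ≤ (i : ℕ) → x i = 0) ∧ ‖x‖ < δ} ⊆ frontier Ω) :
    ¬ ∃ u : Euc N → ℝ,
        LowerSemicontinuousOn u (closure Ω) ∧
        SuperSol Ω (fun _ _ _ X => Pkp N k X + 1) u ∧
        (∀ x ∈ frontier Ω, u x = 0) ∧
        Filter.Tendsto u (nhdsWithin 0 Ω) (nhds 0) :=
  no_supersolution_of_flat_boundary_ball_general hkN δ hδ Ω hΩo hΩb hΩne hΩc hflat
end
end

section
/- Let ω ⊂ ℝ^j be a bounded strictly convex domain and let ψ be the infimum over the family ℱ of concave quadratics positive on ω. Then ψ(x) = 0 for all x ∈ ∂ω; in particular, ψ is continuous on closure(ω). -/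
noncomputable section

open Metric Set Filter Bornology
open scoped RealInnerProductSpace

/-- The function `ψ`: the infimum over the family `ℱ` of concave quadratics
`f(x) = (R² - |x - x₀|²)/2` which are positive on `ω`. -/
def psiF {j : ℕ} (ω : Set (EuclideanSpace ℝ (Fin j))) (x : EuclideanSpace ℝ (Fin j)) : ℝ :=
  sInf {t : ℝ | ∃ (R : ℝ) (x₀ : EuclideanSpace ℝ (Fin j)), 0 < R ∧
    (∀ y ∈ ω, 0 < (R ^ 2 - ‖y - x₀‖ ^ 2) / 2) ∧ t = (R ^ 2 - ‖x - x₀‖ ^ 2) / 2}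

/-!
At a boundary point `z` of `ω` take a supporting hyperplane `⟪ν, · - z⟫ = 0`; by strict convexity
it meets `closure ω` only at `z`. Outside any ball around `z`, compactness keeps `⟪ν, · - z⟫`
bounded away from `0` on `closure ω`, so for `T` large the ball of radius `√(T² + c)` centred at
`z - T ν` contains `ω`, and the corresponding member of `ℱ` equals `c / 2` at `z`. Hence `ψ`
vanishes on `∂ω` and, being squeezed between `0` and a continuous member of `ℱ` that is small at
`z`, is continuous there; inside `ω` it is continuous because it is concave.
-/

open scoped Topology

section Paraboloid

variable {E : Type*} [NormedAddCommGroup E]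

/-- `ℱ` consists of the `paraboloid R x₀` with `0 < R` that are positive on `ω`. -/
def paraboloid (R : ℝ) (x₀ x : E) : ℝ := (R ^ 2 - ‖x - x₀‖ ^ 2) / 2

lemma continuous_paraboloid (R : ℝ) (x₀ : E) : Continuous (paraboloid R x₀) := by
  unfold paraboloid
  fun_prop

lemma paraboloid_pos_iff {R : ℝ} (hR : 0 < R) {x₀ x : E} :
    0 < paraboloid R x₀ x ↔ ‖x - x₀‖ < R := by
  rw [paraboloid, div_pos_iff_of_pos_right two_pos, sub_pos]
  exact pow_lt_pow_iff_left₀ (norm_nonneg _) hR.le two_ne_zero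

lemma concaveOn_paraboloid [NormedSpace ℝ E] (R : ℝ) (x₀ : E) :
    ConcaveOn ℝ univ (paraboloid R x₀) := by
  have hsq : ConvexOn ℝ univ fun x : E => ‖x - x₀‖ ^ 2 := by
    simpa [Function.comp_def, sub_eq_add_neg, add_comm] using
      (convexOn_univ_norm.pow (fun _ _ => norm_nonneg _) 2).translate_left (-x₀)
  refine ((hsq.neg.add_const (R ^ 2)).smul (c := (1 / 2 : ℝ)) (by norm_num)).congr fun x _ => ?_
  simp only [Pi.add_apply, Pi.neg_apply, smul_eq_mul, paraboloid]
  ring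

lemma paraboloid_nonneg_of_mem_closure {s : Set E} {R : ℝ} {x₀ x : E}
    (hpos : ∀ y ∈ s, 0 < paraboloid R x₀ y) (hx : x ∈ closure s) : 0 ≤ paraboloid R x₀ x :=
  closure_minimal (fun y hy => (hpos y hy).le)
    (isClosed_le continuous_const (continuous_paraboloid R x₀)) hx

lemma StrictlyConvexSet.convex [NormedSpace ℝ E] {s : Set E} (hs : StrictlyConvexSet s) :
    Convex ℝ s := by
  refine convex_iff_openSegment_subset.2 fun x hx y hy => ?_
  rcases eq_or_ne x y with rfl | hxy
  · simpa [openSegment_same] using hx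
  rw [openSegment_eq_image]
  rintro _ ⟨t, ⟨ht0, ht1⟩, rfl⟩
  exact hs x (subset_closure hx) y (subset_closure hy) hxy t ht0 ht1

end Paraboloid

section Geometry

variable {E : Type*} [NormedAddCommGroup E] [InnerProductSpace ℝ E]

lemma paraboloid_sub_smul {R t c : ℝ} {ν : E} (hν : ‖ν‖ = 1) (hR : R ^ 2 = t ^ 2 + c) (z y : E) :
    paraboloid R (z - t • ν) y = (c - (‖y - z‖ ^ 2 + 2 * t * ⟪ν, y - z⟫)) / 2 := by
  rw [paraboloid, show y - (z - t • ν) = (y - z) + t • ν by abel, norm_add_sq_real,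
    real_inner_smul_right, real_inner_comm, norm_smul, hν, hR, Real.norm_eq_abs, mul_one, sq_abs]
  ring

lemma StrictlyConvexSet.inner_sub_neg_of_mem_closure {s : Set E} (hs : StrictlyConvexSet s)
    {ν z y : E} (hν : ∀ w ∈ s, ⟪ν, w - z⟫ < 0) (hz : z ∈ closure s) (hy : y ∈ closure s)
    (hyz : y ≠ z) : ⟪ν, y - z⟫ < 0 := by
  have hmid := hν _ (hs y hy z hz hyz (1 / 2) (by norm_num) (by norm_num))
  have : (1 - 1 / 2 : ℝ) • y + (1 / 2 : ℝ) • z - z = (1 / 2 : ℝ) • (y - z) := by module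
  rw [this, real_inner_smul_right] at hmid
  linarith

lemma Convex.exists_unit_inner_sub_neg [CompleteSpace E] {s : Set E} (hconv : Convex ℝ s)
    (hso : IsOpen s) (hne : s.Nonempty) {z : E} (hz : z ∉ s) :
    ∃ ν : E, ‖ν‖ = 1 ∧ ∀ y ∈ s, ⟪ν, y - z⟫ < 0 := by
  obtain ⟨f, hf⟩ := geometric_hahn_banach_open_point hconv hso hz
  set v := (InnerProductSpace.toDual ℝ E).symm f
  have hv : ∀ y ∈ s, ⟪v, y - z⟫ < 0 := fun y hy => by
    rw [inner_sub_right, InnerProductSpace.toDual_symm_apply, InnerProductSpace.toDual_symm_apply]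
    linarith [hf y hy]
  have hv0 : v ≠ 0 := by
    intro h
    obtain ⟨y, hy⟩ := hne
    simpa [h] using hv y hy
  refine ⟨‖v‖⁻¹ • v, norm_smul_inv_norm hv0, fun y hy => ?_⟩
  rw [real_inner_smul_left]
  exact mul_neg_of_pos_of_neg (by positivity) (hv y hy)

/-- Where `‖· - z‖² ≥ c`, the function `⟪ν, · - z⟫` is bounded away from `0` on `K`, so a large
multiple of it absorbs `‖· - z‖²`; elsewhere it suffices that it is nonpositive. -/
lemma IsCompact.exists_norm_sub_sq_add_inner_lt {K : Set E} (hK : IsCompact K) {ν z : E}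
    (hneg : ∀ y ∈ K, y ≠ z → ⟪ν, y - z⟫ < 0) {c : ℝ} (hc : 0 < c) :
    ∃ T, ∀ y ∈ K, ‖y - z‖ ^ 2 + 2 * T * ⟪ν, y - z⟫ < c := by
  obtain ⟨r, hr⟩ := hK.isBounded.subset_closedBall z
  have hfar : IsCompact (K ∩ {y | c ≤ ‖y - z‖ ^ 2}) :=
    hK.inter_right (isClosed_le continuous_const (by fun_prop))
  obtain ⟨a, ha, hga⟩ := hfar.exists_forall_le' (f := fun y => -⟪ν, y - z⟫) (by fun_prop)
    (a := 0) fun y ⟨hyK, hyc⟩ => neg_pos.2 <| hneg y hyK <| by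
      rintro rfl
      norm_num at hyc
      linarith
  set T := r ^ 2 / (2 * a)
  refine ⟨T, fun y hy => ?_⟩
  have hyr : ‖y - z‖ ^ 2 ≤ r ^ 2 :=
    pow_le_pow_left₀ (norm_nonneg _) (by simpa [dist_eq_norm] using hr hy) 2
  by_cases hyc : c ≤ ‖y - z‖ ^ 2
  · have hle : 2 * T * ⟪ν, y - z⟫ ≤ 2 * T * -a :=
      mul_le_mul_of_nonneg_left (by linarith [hga y ⟨hy, hyc⟩]) (by positivity)
    have hTa : 2 * T * a = r ^ 2 := by
      simp only [T]
      field_simp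
    rw [mul_neg, hTa] at hle
    linarith
  · have hg : ⟪ν, y - z⟫ ≤ 0 := by
      rcases eq_or_ne y z with rfl | hyz
      · simp
      · exact (hneg y hy hyz).le
    linarith [mul_nonpos_of_nonneg_of_nonpos (by positivity : 0 ≤ 2 * T) hg]

lemma StrictlyConvexSet.exists_paraboloid_lt_of_mem_frontier [ProperSpace E] {s : Set E}
    (hsc : StrictlyConvexSet s) (hso : IsOpen s) (hsb : IsBounded s) {z : E}
    (hz : z ∈ frontier s) {c : ℝ} (hc : 0 < c) :
    ∃ R x₀, 0 < R ∧ (∀ y ∈ s, 0 < paraboloid R x₀ y) ∧ paraboloid R x₀ z < c := by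
  have hzs : z ∉ s := fun h => hz.2 (hso.interior_eq.symm ▸ h)
  obtain ⟨ν, hν1, hν⟩ :=
    hsc.convex.exists_unit_inner_sub_neg hso (closure_nonempty_iff.1 ⟨z, hz.1⟩) hzs
  obtain ⟨T, hT⟩ := hsb.isCompact_closure.exists_norm_sub_sq_add_inner_lt
    (fun y hy hyz => hsc.inner_sub_neg_of_mem_closure hν hz.1 hy hyz) hc
  have hR : √(T ^ 2 + c) ^ 2 = T ^ 2 + c := Real.sq_sqrt (by positivity)
  refine ⟨√(T ^ 2 + c), z - T • ν, Real.sqrt_pos.2 (by positivity), fun y hy => ?_, ?_⟩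
  · rw [paraboloid_sub_smul hν1 hR]
    linarith [hT y (subset_closure hy)]
  · rw [paraboloid_sub_smul hν1 hR]
    simp only [sub_self, norm_zero, inner_zero_right]
    linarith

end Geometry

section Psi

variable {j : ℕ} {ω : Set (EuclideanSpace ℝ (Fin j))} {x : EuclideanSpace ℝ (Fin j)}

lemma psiF_nonneg (hx : x ∈ closure ω) : 0 ≤ psiF ω x :=
  Real.sInf_nonneg fun _ ⟨_, _, _, hpos, ht⟩ => ht ▸ paraboloid_nonneg_of_mem_closure hpos hx

lemma psiF_le_paraboloid (hx : x ∈ closure ω) {R : ℝ} {x₀ : EuclideanSpace ℝ (Fin j)}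
    (hR : 0 < R) (hpos : ∀ y ∈ ω, 0 < paraboloid R x₀ y) : psiF ω x ≤ paraboloid R x₀ x :=
  csInf_le ⟨0, fun _ ⟨_, _, _, hpos', ht⟩ => ht ▸ paraboloid_nonneg_of_mem_closure hpos' hx⟩
    ⟨R, x₀, hR, hpos, rfl⟩

lemma psiF_concaveOn (hωb : IsBounded ω) (hω : Convex ℝ ω) :
    ConcaveOn ℝ (closure ω) (psiF ω) := by
  refine ⟨hω.closure, fun x hx y hy a b ha hb hab => ?_⟩
  obtain ⟨R, hR, hωR⟩ := hωb.subset_ball_lt 0 0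
  refine le_csInf ⟨_, R, 0, hR, fun w hw => (paraboloid_pos_iff hR).2 ?_, rfl⟩ ?_
  · simpa using hωR hw
  rintro _ ⟨R, x₀, hR, hpos, rfl⟩
  calc a • psiF ω x + b • psiF ω y
      ≤ a • paraboloid R x₀ x + b • paraboloid R x₀ y := by
        gcongr
        exacts [psiF_le_paraboloid hx hR hpos, psiF_le_paraboloid hy hR hpos]
    _ ≤ paraboloid R x₀ (a • x + b • y) :=
        (concaveOn_paraboloid R x₀).2 trivial trivial ha hb hab

variable (hωo : IsOpen ω) (hωb : IsBounded ω) (hωsc : StrictlyConvexSet ω)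
include hωo hωb hωsc

lemma psiF_eq_zero_of_mem_frontier (hx : x ∈ frontier ω) : psiF ω x = 0 := by
  refine le_antisymm (le_of_forall_pos_lt_add fun c hc => ?_) (psiF_nonneg hx.1)
  obtain ⟨R, x₀, hR, hpos, hlt⟩ := hωsc.exists_paraboloid_lt_of_mem_frontier hωo hωb hx hc
  linarith [psiF_le_paraboloid hx.1 hR hpos]

lemma continuousWithinAt_psiF_of_mem_frontier (hx : x ∈ frontier ω) :
    ContinuousWithinAt (psiF ω) (closure ω) x := by
  rw [ContinuousWithinAt, psiF_eq_zero_of_mem_frontier hωo hωb hωsc hx, tendsto_order]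
  refine ⟨fun a ha => ?_, fun c hc => ?_⟩
  · filter_upwards [self_mem_nhdsWithin] with y hy
    exact ha.trans_le (psiF_nonneg hy)
  obtain ⟨R, x₀, hR, hpos, hlt⟩ := hωsc.exists_paraboloid_lt_of_mem_frontier hωo hωb hx hc
  have hnear : ∀ᶠ y in 𝓝[closure ω] x, paraboloid R x₀ y < c :=
    ((continuous_paraboloid R x₀).continuousWithinAt.eventually_lt continuousWithinAt_const hlt)
  filter_upwards [self_mem_nhdsWithin, hnear] with y hy hyc
  exact (psiF_le_paraboloid hy hR hpos).trans_lt hyc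

end Psi

theorem psi_eq_zero_on_boundary_general {j : ℕ}
    (ω : Set (EuclideanSpace ℝ (Fin j))) (hωo : IsOpen ω) (hωb : IsBounded ω)
    (hωsc : StrictlyConvexSet ω) :
    (∀ x ∈ frontier ω, psiF ω x = 0) ∧ ContinuousOn (psiF ω) (closure ω) := by
  refine ⟨fun x hx => psiF_eq_zero_of_mem_frontier hωo hωb hωsc hx, fun x hx => ?_⟩
  by_cases hxω : x ∈ ω
  · have hint : x ∈ interior (closure ω) :=
      interior_mono subset_closure (by rwa [hωo.interior_eq])
    exact ((psiF_concaveOn hωb hωsc.convex).continuousOn_interior.continuousAt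
      (isOpen_interior.mem_nhds hint)).continuousWithinAt
  · exact continuousWithinAt_psiF_of_mem_frontier hωo hωb hωsc ⟨hx, by rwa [hωo.interior_eq]⟩

/-- **Theorem (`supersolution1`).** For a bounded strictly convex domain `ω ⊆ ℝ^j`, the
function `ψ` vanishes on `∂ω`; in particular `ψ ∈ C(closure ω)`. -/
theorem psi_eq_zero_on_boundary {j : ℕ} (hj : 1 ≤ j)
    (ω : Set (EuclideanSpace ℝ (Fin j))) (hωo : IsOpen ω) (hωb : IsBounded ω)
    (hωne : ω.Nonempty) (hωsc : StrictlyConvexSet ω) :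
    (∀ x ∈ frontier ω, psiF ω x = 0) ∧ ContinuousOn (psiF ω) (closure ω) :=
  psi_eq_zero_on_boundary_general ω hωo hωb hωsc
end
end

section
/- Let Ω ⊂ ℝ^N be a bounded, open, convex set and let 1 ≤ j ≤ N be an integer. Then Ω belongs to the class 𝒢_j if and only if Ω belongs to the class 𝒞_{N−j+1}. -/
noncomputable section

open Metric Set Filter Bornology
open scoped RealInnerProductSpace

/-- The Blanc–Rossi condition `𝒢_j`: for every `y ∈ ∂Ω` and `r > 0` there is `δ > 0` such
that for every `x ∈ B_δ(y) ∩ Ω` and every `j`-dimensional subspace `S` there is a unit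
vector `v ∈ S` with `{x + tv : t ∈ ℝ} ∩ B_r(y) ∩ ∂Ω ≠ ∅`. -/
def MemGclass (N j : ℕ) (Ω : Set (Euc N)) : Prop :=
  ∀ y ∈ frontier Ω, ∀ r : ℝ, 0 < r → ∃ δ : ℝ, 0 < δ ∧
    ∀ x ∈ ball y δ ∩ Ω, ∀ S : Submodule ℝ (Euc N), Module.finrank ℝ S = j →
      ∃ v ∈ S, ‖v‖ = 1 ∧ ({z : Euc N | ∃ t : ℝ, z = x + t • v} ∩ ball y r ∩ frontier Ω).Nonempty

/-!
Write a cylinder of class `C_k` as the preimage `(J†)⁻¹ ω` of a strictly convex `ω ⊆ ℝ^k` under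
the adjoint of a linear isometric embedding `J : ℝ^k → ℝ^N`; here `j + k = N + 1`.

`C_k ⇒ G_j`: a `j`-dimensional `S` meets `range J` nontrivially, so it contains a unit vector `v`
on which `J†` is isometric. If the line `x + ℝ v` left `Ω` only far from the boundary point `y`,
`J†` would map its two exit points to the ends of a chord of `closure ω` that passes through `J† x`,
arbitrarily close to the boundary point `J† y`, while both ends stay far from `J† y`; for strictly
convex `ω` this is ruled out by compactness.

`G_j ⇒ C_k`: at `x ∈ ∂Ω` take a supporting normal `n`. The face
`F = closure Ω ∩ {⟪z - x, n⟫ = 0}` has dimension `< j`: otherwise lines through points of `Ω`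
near a relative interior point of `F`, in directions parallel to `F`, meet `∂Ω` only far away.
Hence some `k`-dimensional `V ∋ n` is orthogonal to `F`, and for `range J = V` the projection `J†`
maps `closure Ω` onto a compact set touching the hyperplane `⟪q - J† x, J† n⟫ = 0` only at `J† x`.
Such a set lies in `ω = {q | φ ‖q - p‖ + ⟪q - p, n'⟫ < 0}`, where `φ` is a strictly convex sum of
ramps `a_k ((t - s_k)₊)²`, flat enough at `0` to stay below the rate at which the set leaves the
hyperplane.
-/

open Module
open scoped Topology InnerProduct

def rampSq (s t : ℝ) : ℝ := max (t - s) 0 ^ 2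

lemma rampSq_nonneg (s t : ℝ) : 0 ≤ rampSq s t := sq_nonneg _

lemma rampSq_mono (s : ℝ) : Monotone (rampSq s) := fun _ _ h =>
  pow_le_pow_left₀ (le_max_right _ _) (max_le_max (by linarith) le_rfl) 2

lemma rampSq_of_le {s t : ℝ} (h : t ≤ s) : rampSq s t = 0 := by
  simp [rampSq, max_eq_right (sub_nonpos.mpr h)]

lemma rampSq_le_sq {s t : ℝ} (hs : 0 ≤ s) (ht : 0 ≤ t) : rampSq s t ≤ t ^ 2 :=
  pow_le_pow_left₀ (le_max_right _ _) (max_le (by linarith) ht) 2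

lemma rampSq_lt_rampSq {s A B : ℝ} (hsB : s < B) (hAB : A < B) : rampSq s A < rampSq s B := by
  have hB : max (B - s) 0 = B - s := max_eq_left (by linarith)
  refine pow_lt_pow_left₀ ?_ (le_max_right _ _) two_ne_zero
  rw [hB]
  exact max_lt (by linarith) (by linarith)

/-- The defect term makes this inequality give strict convexity as well as convexity. -/
lemma rampSq_combo_le {s A B a b : ℝ} (ha : 0 ≤ a) (hb : 0 ≤ b) (hab : a + b = 1) :
    rampSq s (a * A + b * B) ≤
      a * rampSq s A + b * rampSq s B - a * b * (max (A - s) 0 - max (B - s) 0) ^ 2 := by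
  set u := max (A - s) 0
  set v := max (B - s) 0
  have hu : A - s ≤ u := le_max_left _ _
  have hv : B - s ≤ v := le_max_left _ _
  have hle : max (a * A + b * B - s) 0 ≤ a * u + b * v := by
    refine max_le ?_ (by positivity)
    have e : a * A + b * B - s = a * (A - s) + b * (B - s) := by linear_combination s * hab
    rw [e]
    exact add_le_add (mul_le_mul_of_nonneg_left hu ha) (mul_le_mul_of_nonneg_left hv hb)
  calc rampSq s (a * A + b * B) ≤ (a * u + b * v) ^ 2 :=
        pow_le_pow_left₀ (le_max_right _ _) hle 2
    _ = a * u ^ 2 + b * v ^ 2 - a * b * (u - v) ^ 2 := by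
        rw [show b = 1 - a by linarith]; ring

lemma max_sub_ne_max_sub {s A B : ℝ} (hAB : A ≠ B) (hs : s < max A B) :
    max (A - s) 0 ≠ max (B - s) 0 := by
  rcases hAB.lt_or_gt with h | h
  · rw [max_eq_right h.le] at hs
    rw [max_eq_left (by linarith : 0 ≤ B - s)]
    exact (max_lt (by linarith) (by linarith)).ne
  · rw [max_eq_left h.le] at hs
    rw [max_eq_left (by linarith : 0 ≤ A - s)]
    exact (max_lt (by linarith) (by linarith)).ne'

def rampSeries (a s : ℕ → ℝ) (t : ℝ) : ℝ := ∑' k, a k * rampSq (s k) t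

section rampSeries

variable {a s : ℕ → ℝ} (ha : ∀ k, 0 < a k) (hsum : Summable a) (hs : ∀ k, 0 ≤ s k)
include ha hsum hs

lemma summable_rampSeries (t : ℝ) : Summable fun k => a k * rampSq (s k) t := by
  refine (hsum.mul_right (max t 0 ^ 2)).of_nonneg_of_le
    (fun k => mul_nonneg (ha k).le (rampSq_nonneg _ _)) fun k => ?_
  refine mul_le_mul_of_nonneg_left (pow_le_pow_left₀ (le_max_right _ _) ?_ 2) (ha k).le
  exact max_le_max (by linarith [hs k]) le_rfl

omit ha hsum in
lemma rampSeries_zero : rampSeries a s 0 = 0 := by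
  simp [rampSeries, rampSq_of_le (hs _)]

lemma rampSeries_combo_add_le (k : ℕ) {A B α β : ℝ} (hα : 0 ≤ α) (hβ : 0 ≤ β)
    (hαβ : α + β = 1) :
    rampSeries a s (α * A + β * B) + α * β * a k * (max (A - s k) 0 - max (B - s k) 0) ^ 2 ≤
      α * rampSeries a s A + β * rampSeries a s B := by
  set d := α * β * a k * (max (A - s k) 0 - max (B - s k) 0) ^ 2
  have hterm : ∀ m, a m * rampSq (s m) (α * A + β * B) + (if m = k then d else 0) ≤
      α * (a m * rampSq (s m) A) + β * (a m * rampSq (s m) B) := fun m => by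
    have := mul_le_mul_of_nonneg_left (rampSq_combo_le (s := s m) (A := A) (B := B) hα hβ hαβ)
      (ha m).le
    split_ifs with h
    · subst h; linarith
    · have : 0 ≤ α * β * a m * (max (A - s m) 0 - max (B - s m) 0) ^ 2 := by
        have := (ha m).le; positivity
      linarith
  have h := Summable.tsum_le_tsum hterm
    ((summable_rampSeries ha hsum hs _).add (hasSum_ite_eq k d).summable)
    (((summable_rampSeries ha hsum hs A).mul_left α).add
      ((summable_rampSeries ha hsum hs B).mul_left β))
  rwa [Summable.tsum_add (summable_rampSeries ha hsum hs _) (hasSum_ite_eq k d).summable,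
    tsum_ite_eq, Summable.tsum_add ((summable_rampSeries ha hsum hs A).mul_left α)
      ((summable_rampSeries ha hsum hs B).mul_left β), tsum_mul_left, tsum_mul_left] at h

lemma convexOn_rampSeries : ConvexOn ℝ univ (rampSeries a s) := by
  refine ⟨convex_univ, fun A _ B _ α β hα hβ hαβ => ?_⟩
  have h := rampSeries_combo_add_le ha hsum hs 0 (A := A) (B := B) hα hβ hαβ
  have : 0 ≤ α * β * a 0 * (max (A - s 0) 0 - max (B - s 0) 0) ^ 2 := by
    have := (ha 0).le; positivity
  simp only [smul_eq_mul]
  linarith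

lemma continuous_rampSeries : Continuous (rampSeries a s) :=
  continuousOn_univ.mp ((convexOn_rampSeries ha hsum hs).continuousOn isOpen_univ)

lemma self_le_rampSeries {t : ℝ} (ht : 2 * s 0 + 2 / a 0 ≤ t) : t ≤ rampSeries a s t := by
  have hlow : a 0 * rampSq (s 0) t ≤ rampSeries a s t :=
    (summable_rampSeries ha hsum hs t).le_tsum 0 fun k _ => mul_nonneg (ha k).le (rampSq_nonneg _ _)
  have hpos : 0 < 2 / a 0 := div_pos two_pos (ha 0)
  have h2 : 2 ≤ a 0 * (t - s 0) :=
    calc 2 = a 0 * (2 / a 0) := by field_simp [(ha 0).ne']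
      _ ≤ a 0 * (t - s 0) := mul_le_mul_of_nonneg_left (by linarith [hs 0]) (ha 0).le
  have hr : rampSq (s 0) t = (t - s 0) ^ 2 := by rw [rampSq, max_eq_left (by linarith [hs 0])]
  rw [hr] at hlow
  nlinarith [mul_le_mul_of_nonneg_right h2 (by linarith [hs 0] : 0 ≤ t - s 0), hs 0]

variable (hsmall : ∀ B > 0, ∃ k, s k < B)
include hsmall

lemma strictMonoOn_rampSeries : StrictMonoOn (rampSeries a s) (Ici 0) := by
  intro A _ B hB hAB
  obtain ⟨k, hk⟩ := hsmall B (lt_of_le_of_lt (mem_Ici.mp ‹_›) hAB)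
  refine Summable.tsum_lt_tsum (i := k)
    (fun m => mul_le_mul_of_nonneg_left (rampSq_mono _ hAB.le) (ha m).le)
    (mul_lt_mul_of_pos_left (rampSq_lt_rampSq hk hAB) (ha k))
    (summable_rampSeries ha hsum hs A) (summable_rampSeries ha hsum hs B)

lemma strictConvexOn_rampSeries : StrictConvexOn ℝ (Ici 0) (rampSeries a s) := by
  refine ⟨convex_Ici 0, fun A hA B hB hAB α β hα hβ hαβ => ?_⟩
  have hmax : 0 < max A B := by
    rcases hAB.lt_or_gt with h | h
    · exact lt_max_of_lt_right ((mem_Ici.mp hA).trans_lt h)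
    · exact lt_max_of_lt_left ((mem_Ici.mp hB).trans_lt h)
  obtain ⟨k, hk⟩ := hsmall _ hmax
  have h := rampSeries_combo_add_le ha hsum hs k (A := A) (B := B) hα.le hβ.le hαβ
  have : 0 < α * β * a k * (max (A - s k) 0 - max (B - s k) 0) ^ 2 := by
    have := ha k
    have := sub_ne_zero.mpr (max_sub_ne_max_sub hAB hk)
    positivity
  simp only [smul_eq_mul]
  linarith

end rampSeries

theorem exists_strictConvexOn_comp_lt {X : Type*} {s : Set X} {f g : X → ℝ} {T : ℝ} (hT : 0 < T)
    (hgT : ∀ z ∈ s, g z ≤ T) (hfg : ∀ t > 0, ∃ c > 0, ∀ z ∈ s, t ≤ g z → c ≤ f z) :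
    ∃ φ : ℝ → ℝ, Continuous φ ∧ φ 0 = 0 ∧ StrictMonoOn φ (Ici 0) ∧
      StrictConvexOn ℝ (Ici 0) φ ∧ (∃ R, ∀ t, R ≤ t → t ≤ φ t) ∧
      ∀ z ∈ s, 0 < g z → φ (g z) < f z := by
  set σ : ℕ → ℝ := fun k => T * (1 / 2) ^ k
  choose c hc hcf using fun k => hfg (σ k) (by positivity)
  -- the weights are chosen so that the `k`-th term is at most `c k / 4 * (1/2)^k` on `[0, T]`
  set a : ℕ → ℝ := fun k => min (c k) 1 / (4 * T ^ 2) * (1 / 2) ^ k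
  have ha : ∀ k, 0 < a k := fun k => by have := hc k; positivity
  have hsum : Summable a := by
    refine ((summable_geometric_two).mul_left (1 / (4 * T ^ 2))).of_nonneg_of_le
      (fun k => (ha k).le) fun k => ?_
    show min (c k) 1 / (4 * T ^ 2) * (1 / 2) ^ k ≤ _
    gcongr
    exact min_le_right _ _
  have hσ : ∀ k, 0 ≤ σ k := fun k => by positivity
  have hsmall : ∀ B > 0, ∃ k, σ k < B := fun B hB => by
    obtain ⟨k, hk⟩ := exists_pow_lt_of_lt_one (div_pos hB hT) (by norm_num : (1 / 2 : ℝ) < 1)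
    exact ⟨k, by rwa [lt_div_iff₀' hT] at hk⟩
  refine ⟨rampSeries a σ, continuous_rampSeries ha hsum hσ, rampSeries_zero hσ,
    strictMonoOn_rampSeries ha hsum hσ hsmall, strictConvexOn_rampSeries ha hsum hσ hsmall,
    ⟨2 * σ 0 + 2 / a 0, fun _ => self_le_rampSeries ha hsum hσ⟩, fun z hz hgz => ?_⟩
  obtain ⟨k₀, hk₀⟩ := hsmall _ hgz
  have hfpos : 0 < f z := (hc k₀).trans_le (hcf k₀ z hz hk₀.le)
  have hterm : ∀ k, a k * rampSq (σ k) (g z) ≤ f z / 4 * (1 / 2) ^ k := fun k => by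
    rcases le_or_gt (g z) (σ k) with h | h
    · rw [rampSq_of_le h, mul_zero]; positivity
    · calc a k * rampSq (σ k) (g z) ≤ a k * T ^ 2 :=
            mul_le_mul_of_nonneg_left ((rampSq_le_sq (hσ k) hgz.le).trans
              (pow_le_pow_left₀ hgz.le (hgT z hz) 2)) (ha k).le
        _ = min (c k) 1 / 4 * (1 / 2) ^ k := by simp only [a]; field_simp
        _ ≤ f z / 4 * (1 / 2) ^ k := by
            gcongr
            exact (min_le_left _ _).trans (hcf k z hz h.le)
  calc rampSeries a σ (g z) ≤ ∑' k, f z / 4 * (1 / 2) ^ k :=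
        Summable.tsum_le_tsum hterm (summable_rampSeries ha hsum hσ _)
          (summable_geometric_two.mul_left _)
    _ = f z / 2 := by rw [tsum_mul_left, tsum_geometric_two]; ring
    _ < f z := by linarith

section StrictlyConvexSet

variable {E : Type*} [NormedAddCommGroup E] [NormedSpace ℝ E]

lemma StrictConvexOn.strictlyConvexSet_setOf_lt {g : E → ℝ} (hg : StrictConvexOn ℝ univ g)
    (hc : Continuous g) (c : ℝ) : StrictlyConvexSet {x | g x < c} := by
  intro x hx y hy hxy t ht0 ht1
  have hx' : g x ≤ c := closure_lt_subset_le hc continuous_const hx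
  have hy' : g y ≤ c := closure_lt_subset_le hc continuous_const hy
  have h := hg.2 (mem_univ x) (mem_univ y) hxy (sub_pos.mpr ht1) ht0 (by ring)
  simp only [smul_eq_mul] at h
  show g _ < c
  nlinarith

lemma strictConvexOn_comp_norm_sub [StrictConvexSpace ℝ E] {φ : ℝ → ℝ}
    (hmono : StrictMonoOn φ (Ici 0)) (hconv : StrictConvexOn ℝ (Ici 0) φ) (p : E) :
    StrictConvexOn ℝ univ fun q => φ ‖q - p‖ := by
  refine ⟨convex_univ, fun x _ y _ hxy a b ha hb hab => ?_⟩
  have e : a • x + b • y - p = a • (x - p) + b • (y - p) := by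
    rw [smul_sub, smul_sub, ← add_sub_add_comm, ← add_smul, hab, one_smul]
  have hne : x - p ≠ y - p := fun h => hxy (sub_left_injective h)
  have hle : ‖a • (x - p) + b • (y - p)‖ ≤ a * ‖x - p‖ + b * ‖y - p‖ := by
    refine (norm_add_le _ _).trans_eq ?_
    rw [norm_smul, norm_smul, Real.norm_of_nonneg ha.le, Real.norm_of_nonneg hb.le]
  simp only [smul_eq_mul, e]
  rcases eq_or_ne ‖x - p‖ ‖y - p‖ with h | h
  · calc φ ‖a • (x - p) + b • (y - p)‖ < φ ‖x - p‖ :=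
          hmono (norm_nonneg _) (norm_nonneg _) (norm_combo_lt_of_ne le_rfl h.ge hne ha hb hab)
      _ = a * φ ‖x - p‖ + b * φ ‖y - p‖ := by rw [← h, ← add_mul, hab, one_mul]
  · calc φ ‖a • (x - p) + b • (y - p)‖ ≤ φ (a * ‖x - p‖ + b * ‖y - p‖) :=
          hmono.monotoneOn (norm_nonneg _) (mem_Ici.mpr (by positivity)) hle
      _ < a * φ ‖x - p‖ + b * φ ‖y - p‖ :=
          hconv.2 (norm_nonneg (x - p)) (norm_nonneg (y - p)) h ha hb hab

lemma StrictlyConvexSet.exists_pos_le_dist_of_mem_segment [ProperSpace E] {ω : Set E}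
    (hω : StrictlyConvexSet ω) (hb : IsBounded ω) {p : E} (hp : p ∉ ω) {ρ : ℝ} (hρ : 0 < ρ) :
    ∃ δ > 0, ∀ a ∈ closure ω, ∀ b ∈ closure ω, ρ ≤ dist a p → ρ ≤ dist b p →
      ∀ z ∈ segment ℝ a b, δ ≤ dist z p := by
  set K := closure ω ∩ {a | ρ ≤ dist a p}
  have hK : IsCompact K :=
    hb.isCompact_closure.inter_right
      (isClosed_le continuous_const (continuous_id.dist continuous_const))
  have hpos : ∀ q ∈ K ×ˢ K ×ˢ Icc (0 : ℝ) 1,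
      0 < dist ((1 - q.2.2) • q.1 + q.2.2 • q.2.1) p := by
    rintro ⟨a, b, θ⟩ ⟨⟨ha, hap⟩, ⟨hb, hbp⟩, hθ0, hθ1⟩
    dsimp only at ha hb hθ0 hθ1 ⊢
    replace hap : ρ ≤ dist a p := hap
    replace hbp : ρ ≤ dist b p := hbp
    refine dist_pos.mpr fun h => ?_
    rcases hθ0.eq_or_lt with rfl | hθ0
    · rw [sub_zero, one_smul, zero_smul, add_zero] at h
      rw [h, dist_self] at hap; linarith
    rcases hθ1.eq_or_lt with rfl | hθ1
    · rw [sub_self, zero_smul, one_smul, zero_add] at h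
      rw [h, dist_self] at hbp; linarith
    rcases eq_or_ne a b with rfl | hab
    · rw [← add_smul, sub_add_cancel, one_smul] at h
      rw [h, dist_self] at hap; linarith
    exact hp (h ▸ hω a ha b hb hab θ hθ0 hθ1)
  obtain ⟨δ, hδ, hδf⟩ := (hK.prod (hK.prod isCompact_Icc)).exists_forall_le'
    (Continuous.continuousOn (by fun_prop)) hpos
  refine ⟨δ, hδ, fun a ha b hb hap hbp z hz => ?_⟩
  rw [segment_eq_image] at hz
  obtain ⟨θ, hθ, rfl⟩ := hz
  exact hδf (a, b, θ) ⟨⟨ha, hap⟩, ⟨hb, hbp⟩, hθ⟩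

end StrictlyConvexSet

lemma IsCompact.exists_pos_le_of_lt {X : Type*} [TopologicalSpace X] {K : Set X}
    (hK : IsCompact K) {f g : X → ℝ} (hf : Continuous f) (hg : Continuous g)
    (hfg : ∀ z ∈ K, 0 < g z → 0 < f z) {t : ℝ} (ht : 0 < t) :
    ∃ c > 0, ∀ z ∈ K, t ≤ g z → c ≤ f z := by
  obtain ⟨c, hc, hcf⟩ := (hK.inter_right (isClosed_le continuous_const hg)).exists_forall_le'
    hf.continuousOn fun z ⟨hz, hzt⟩ => hfg z hz (ht.trans_le hzt)
  exact ⟨c, hc, fun z hz hzt => hcf z ⟨hz, hzt⟩⟩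

section Sublevel

variable {F : Type*} [NormedAddCommGroup F] [InnerProductSpace ℝ F] {φ : ℝ → ℝ} (p n : F)

lemma isBounded_setOf_comp_norm_sub_add_inner_lt {R : ℝ} (hR : ∀ t, R ≤ t → t ≤ φ t)
    (hn : ‖n‖ ≤ 1) : IsBounded {q | φ ‖q - p‖ + ⟪q - p, n⟫ < 0} := by
  refine (isBounded_closedBall (x := p) (r := R)).subset fun q hq => ?_
  replace hq : φ ‖q - p‖ + ⟪q - p, n⟫ < 0 := hq
  rw [mem_closedBall, dist_eq_norm]
  by_contra! hfar
  have hinner : -‖q - p‖ ≤ ⟪q - p, n⟫ :=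
    neg_le_of_abs_le ((abs_real_inner_le_norm (q - p) n).trans
      (mul_le_of_le_one_right (norm_nonneg _) hn))
  linarith [hR _ hfar.le]

lemma strictlyConvexSet_setOf_comp_norm_sub_add_inner_lt [StrictConvexSpace ℝ F]
    (hφc : Continuous φ) (hmono : StrictMonoOn φ (Ici 0)) (hconv : StrictConvexOn ℝ (Ici 0) φ) :
    StrictlyConvexSet {q | φ ‖q - p‖ + ⟪q - p, n⟫ < 0} := by
  refine StrictConvexOn.strictlyConvexSet_setOf_lt ?_ (by fun_prop) 0
  refine (strictConvexOn_comp_norm_sub hmono hconv p).add_convexOn ?_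
  refine ((((innerSL ℝ n).toLinearMap.convexOn convex_univ).add_const (-⟪n, p⟫))).congr
    fun q _ => ?_
  simp only [Pi.add_apply, ContinuousLinearMap.coe_coe, innerSL_apply_apply]
  rw [inner_sub_left, real_inner_comm n q, real_inner_comm n p, sub_eq_add_neg]

end Sublevel

theorem exists_strictlyConvexSet_superset {F : Type*} [NormedAddCommGroup F]
    [InnerProductSpace ℝ F] [ProperSpace F] {A : Set F} (hA : IsBounded A) {p n : F}
    (hn : ‖n‖ = 1) (hsupp : ∀ q ∈ A, ⟪q - p, n⟫ < 0)
    (htouch : ∀ q ∈ closure A, ⟪q - p, n⟫ = 0 → q = p) :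
    ∃ ω : Set F, IsOpen ω ∧ IsBounded ω ∧ StrictlyConvexSet ω ∧ A ⊆ ω ∧ p ∉ ω := by
  have hle : ∀ q ∈ closure A, ⟪q - p, n⟫ ≤ 0 := fun q hq =>
    closure_lt_subset_le (f := fun q => ⟪q - p, n⟫) (by fun_prop) continuous_const
      (closure_mono hsupp hq)
  have hmod : ∀ t > 0, ∃ c > 0, ∀ q ∈ A, t ≤ ‖q - p‖ → c ≤ -⟪q - p, n⟫ := fun t ht => by
    obtain ⟨c, hc, hcf⟩ := hA.isCompact_closure.exists_pos_le_of_lt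
      (f := fun q => -⟪q - p, n⟫) (g := fun q => ‖q - p‖) (by fun_prop) (by fun_prop)
      (fun q hq hqp => neg_pos.mpr ((hle q hq).lt_of_ne fun h => by
        rw [htouch q hq h, sub_self, norm_zero] at hqp
        exact hqp.false)) ht
    exact ⟨c, hc, fun q hq => hcf q (subset_closure hq)⟩
  obtain ⟨R, hR⟩ := hA.subset_closedBall p
  obtain ⟨φ, hφc, hφ0, hφmono, hφconv, ⟨R', hR'⟩, hφlt⟩ :=
    exists_strictConvexOn_comp_lt (s := A) (g := fun q => ‖q - p‖) (lt_max_of_lt_right one_pos)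
      (fun q hq => (dist_eq_norm q p ▸ mem_closedBall.mp (hR hq)).trans (le_max_left R 1)) hmod
  refine ⟨{q | φ ‖q - p‖ + ⟪q - p, n⟫ < 0}, isOpen_lt (by fun_prop) continuous_const,
    isBounded_setOf_comp_norm_sub_add_inner_lt p n hR' hn.le,
    strictlyConvexSet_setOf_comp_norm_sub_add_inner_lt p n hφc hφmono hφconv, fun q hq => ?_,
    by simp [hφ0]⟩
  show φ ‖q - p‖ + ⟪q - p, n⟫ < 0
  rcases (norm_nonneg (q - p)).eq_or_lt with h | h
  · rw [← h, hφ0, zero_add]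
    exact hsupp q hq
  · linarith [hφlt q hq h]

theorem exists_strictlyConvexSet_preimage {E F : Type*} [NormedAddCommGroup E]
    [InnerProductSpace ℝ E] [ProperSpace E] [NormedAddCommGroup F] [InnerProductSpace ℝ F]
    [ProperSpace F] {Ω : Set E} (hΩb : IsBounded Ω) {x : E} (hx : x ∈ closure Ω) (ℓ : E →L[ℝ] F)
    {n : E} {n' : F} (hn' : ‖n'‖ = 1) (hℓn : ∀ z, ⟪ℓ z, n'⟫ = ⟪z, n⟫)
    (hsupp : ∀ z ∈ Ω, ⟪z - x, n⟫ < 0) (htouch : ∀ z ∈ closure Ω, ⟪z - x, n⟫ = 0 → ℓ z = ℓ x) :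
    ∃ ω : Set F, IsOpen ω ∧ IsBounded ω ∧ ω.Nonempty ∧ StrictlyConvexSet ω ∧
      Ω ⊆ ℓ ⁻¹' ω ∧ x ∈ frontier (ℓ ⁻¹' ω) := by
  obtain ⟨ω, hωo, hωb, hωsc, hsub, hxω⟩ := exists_strictlyConvexSet_superset (A := ℓ '' Ω)
    (ℓ.lipschitz.isBounded_image hΩb) hn'
    (by rintro _ ⟨z, hz, rfl⟩; rw [← map_sub, hℓn]; exact hsupp z hz)
    (by
      intro q hq hqn
      rw [← image_closure_of_isCompact hΩb.isCompact_closure ℓ.continuous.continuousOn] at hq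
      obtain ⟨z, hz, rfl⟩ := hq
      rw [← map_sub, hℓn] at hqn
      exact htouch z hz hqn)
  have hΩω : Ω ⊆ ℓ ⁻¹' ω := fun z hz => hsub ⟨z, hz, rfl⟩
  refine ⟨ω, hωo, hωb, ((closure_nonempty_iff.mp ⟨x, hx⟩).image ℓ).mono hsub, hωsc, hΩω, ?_⟩
  rw [(hωo.preimage ℓ.continuous).frontier_eq]
  exact ⟨closure_mono hΩω hx, hxω⟩

lemma Submodule.exists_le_le_finrank_eq {K V : Type*} [DivisionRing K] [AddCommGroup V]
    [Module K V] [FiniteDimensional K V] {A B : Submodule K V} (hAB : A ≤ B) {k : ℕ}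
    (hA : finrank K A ≤ k) (hB : k ≤ finrank K B) :
    ∃ C : Submodule K V, A ≤ C ∧ C ≤ B ∧ finrank K C = k := by
  induction k with
  | zero => exact ⟨A, le_rfl, hAB, by omega⟩
  | succ k ih =>
    rcases hA.eq_or_lt with hA | hA
    · exact ⟨A, le_rfl, hAB, hA⟩
    obtain ⟨C, hAC, hCB, hC⟩ := ih (by omega) (by omega)
    obtain ⟨v, hvB, hvC⟩ := SetLike.exists_of_lt (hCB.lt_of_ne (by rintro rfl; omega))
    exact ⟨C ⊔ K ∙ v, hAC.trans le_sup_left, sup_le hCB ((span_singleton_le_iff_mem v B).mpr hvB),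
      by rw [Submodule.finrank_sup_span_singleton hvC, hC]⟩

lemma Submodule.exists_norm_eq_one_mem_inf {E : Type*} [NormedAddCommGroup E]
    [NormedSpace ℝ E] [FiniteDimensional ℝ E] {S V : Submodule ℝ E}
    (h : finrank ℝ E < finrank ℝ S + finrank ℝ V) : ∃ v ∈ S ⊓ V, ‖v‖ = 1 := by
  have hne : S ⊓ V ≠ ⊥ := fun hbot => by
    have := Submodule.finrank_sup_add_finrank_inf_eq S V
    rw [hbot, finrank_bot] at this
    have := (S ⊔ V).finrank_le
    omega
  obtain ⟨v, hv, hv0⟩ := Submodule.exists_mem_ne_zero_of_ne_bot hne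
  exact ⟨‖v‖⁻¹ • v, (S ⊓ V).smul_mem _ hv, norm_smul_inv_norm hv0⟩

lemma exists_linearIsometry_range_eq {E : Type*} [NormedAddCommGroup E] [InnerProductSpace ℝ E]
    {k : ℕ} (V : Submodule ℝ E) [FiniteDimensional ℝ V] (hV : finrank ℝ V = k) :
    ∃ J : Euc k →ₗᵢ[ℝ] E, LinearMap.range J.toLinearMap = V := by
  set e := ((stdOrthonormalBasis ℝ V).reindex (finCongr hV)).repr.symm
  refine ⟨V.subtypeₗᵢ.comp e.toLinearIsometry, ?_⟩
  ext v
  constructor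
  · rintro ⟨u, rfl⟩
    exact (e u).2
  · intro hv
    exact ⟨e.symm ⟨v, hv⟩, by simp⟩

section LinearIsometry

variable {E F : Type*} [NormedAddCommGroup E] [InnerProductSpace ℝ E] [CompleteSpace E]
  [NormedAddCommGroup F] [InnerProductSpace ℝ F] [CompleteSpace F] (J : F →ₗᵢ[ℝ] E)

lemma LinearIsometry.adjoint_apply_apply (u : F) : (J.toContinuousLinearMap†) (J u) = u :=
  DFunLike.congr_fun ((ContinuousLinearMap.norm_map_iff_adjoint_comp_self _).mp J.norm_map) u

lemma LinearIsometry.norm_adjoint_apply_le (z : E) : ‖(J.toContinuousLinearMap†) z‖ ≤ ‖z‖ :=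
  ((J.toContinuousLinearMap†).le_opNorm z).trans <| mul_le_of_le_one_left (norm_nonneg z)
    ((ContinuousLinearMap.adjoint.norm_map _).trans_le J.norm_toContinuousLinearMap_le)

lemma LinearIsometry.exists_norm_adjoint_apply_eq_one [FiniteDimensional ℝ E]
    [FiniteDimensional ℝ F] {S : Submodule ℝ E} (h : finrank ℝ E < finrank ℝ S + finrank ℝ F) :
    ∃ v ∈ S, ‖v‖ = 1 ∧ ‖(J.toContinuousLinearMap†) v‖ = 1 := by
  obtain ⟨v, ⟨hvS, u, rfl⟩, hv1⟩ := Submodule.exists_norm_eq_one_mem_inf (S := S)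
    (V := LinearMap.range J.toLinearMap) (by rwa [LinearMap.finrank_range_of_inj J.injective])
  exact ⟨J u, hvS, hv1, by rw [J.adjoint_apply_apply, ← J.norm_map]; exact hv1⟩

end LinearIsometry

namespace Euc

variable {k N : ℕ}

def trunc (hk : k ≤ N) : Euc N →L[ℝ] Euc k :=
  LinearMap.toContinuousLinearMap
    { toFun := fun x => WithLp.toLp 2 fun i => x (Fin.castLE hk i)
      map_add' := fun _ _ => rfl
      map_smul' := fun _ _ => rfl }

lemma trunc_apply (hk : k ≤ N) (x : Euc N) (i : Fin k) : trunc hk x i = x (Fin.castLE hk i) := rfl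

lemma trunc_single (hk : k ≤ N) (i : Fin k) :
    trunc hk (EuclideanSpace.single (Fin.castLE hk i) 1) = EuclideanSpace.single i 1 := by
  ext i'
  simp [trunc_apply, (Fin.castLE_injective hk).eq_iff]

lemma trunc_comp_adjoint (hk : k ≤ N) : trunc hk ∘L (trunc hk)† = 1 := by
  ext y i
  have := (trunc hk).adjoint_inner_right (EuclideanSpace.single (Fin.castLE hk i) 1) y
  simpa [EuclideanSpace.inner_single_left, trunc_single, trunc_apply] using this

def zeroExtend (hk : k ≤ N) : Euc k →ₗᵢ[ℝ] Euc N where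
  toLinearMap := (trunc hk)†
  norm_map' := (ContinuousLinearMap.norm_map_iff_adjoint_comp_self _).mpr <| by
    rw [ContinuousLinearMap.adjoint_adjoint, trunc_comp_adjoint]

lemma zeroExtend_single (hk : k ≤ N) (i : Fin k) :
    zeroExtend hk (EuclideanSpace.single i 1) = EuclideanSpace.single (Fin.castLE hk i) 1 := by
  refine ext_inner_right ℝ fun z => ?_
  show ⟪((trunc hk)†) (EuclideanSpace.single i 1), z⟫ = _
  rw [ContinuousLinearMap.adjoint_inner_left]
  simp [EuclideanSpace.inner_single_left, trunc_apply]

lemma adjoint_comp_zeroExtend (hk : k ≤ N) (O : Euc N ≃ₗᵢ[ℝ] Euc N) :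
    (O.toLinearIsometry.comp (zeroExtend hk)).toContinuousLinearMap† =
      trunc hk ∘L (O.symm : Euc N →L[ℝ] Euc N) := by
  have : (O.toLinearIsometry.comp (zeroExtend hk)).toContinuousLinearMap =
      (O : Euc N →L[ℝ] Euc N) ∘L (trunc hk)† := rfl
  rw [this, ContinuousLinearMap.adjoint_comp, ContinuousLinearMap.adjoint_adjoint,
    LinearIsometryEquiv.adjoint_eq_symm]

lemma exists_linearIsometryEquiv_comp_zeroExtend (hk : k ≤ N) (J : Euc k →ₗᵢ[ℝ] Euc N) :
    ∃ O : Euc N ≃ₗᵢ[ℝ] Euc N, O.toLinearIsometry.comp (zeroExtend hk) = J := by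
  set v : Fin N → Euc N := fun i => J (trunc hk (EuclideanSpace.single i 1))
  have hv : Orthonormal ℝ ((range (Fin.castLE hk)).domRestrict v) := by
    rw [orthonormal_iff_ite]
    rintro ⟨_, i, rfl⟩ ⟨_, i', rfl⟩
    simp [v, trunc_single, EuclideanSpace.inner_single_left, Subtype.ext_iff,
      (Fin.castLE_injective hk).eq_iff]
  obtain ⟨b, hb⟩ := hv.exists_orthonormalBasis_extension_of_card_eq (by simp)
  refine ⟨b.repr.symm, LinearIsometry.toLinearMap_injective <|
    (EuclideanSpace.basisFun (Fin k) ℝ).toBasis.ext fun i => ?_⟩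
  simp [zeroExtend_single, hb _ (mem_range_self i), v, trunc_single]

lemma image_preimage_trunc (hk : k ≤ N) (O : Euc N ≃ₗᵢ[ℝ] Euc N) (ω : Set (Euc k)) :
    O '' (trunc hk ⁻¹' ω) =
      (O.toLinearIsometry.comp (zeroExtend hk)).toContinuousLinearMap† ⁻¹' ω := by
  rw [O.image_eq_preimage_symm, adjoint_comp_zeroExtend]
  rfl

end Euc

theorem memCclass_iff_forall_exists_linearIsometry {k N : ℕ} (hk : k ≤ N) {Ω : Set (Euc N)} :
    MemCclass N k Ω ↔ ∀ x ∈ frontier Ω, ∃ (J : Euc k →ₗᵢ[ℝ] Euc N) (ω : Set (Euc k)),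
      IsOpen ω ∧ IsBounded ω ∧ ω.Nonempty ∧ StrictlyConvexSet ω ∧
        Ω ⊆ J.toContinuousLinearMap† ⁻¹' ω ∧ x ∈ frontier (J.toContinuousLinearMap† ⁻¹' ω) := by
  refine forall₂_congr fun x _ => ⟨?_, ?_⟩
  · rintro ⟨O, _, ⟨hk', ω, hωo, hωb, hωne, hωsc, rfl⟩, hsub, hfr⟩
    refine ⟨O.toLinearIsometry.comp (Euc.zeroExtend hk'), ω, hωo, hωb, hωne, hωsc, ?_⟩
    rw [← Euc.image_preimage_trunc hk' O ω]
    exact ⟨hsub, hfr⟩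
  · rintro ⟨J, ω, hωo, hωb, hωne, hωsc, hsub, hfr⟩
    obtain ⟨O, rfl⟩ := Euc.exists_linearIsometryEquiv_comp_zeroExtend hk J
    refine ⟨O, Euc.trunc hk ⁻¹' ω, ⟨hk, ω, hωo, hωb, hωne, hωsc, rfl⟩, ?_⟩
    rw [Euc.image_preimage_trunc hk O ω]
    exact ⟨hsub, hfr⟩


section Lines

variable {E F : Type*} [NormedAddCommGroup E] [NormedSpace ℝ E] [NormedAddCommGroup F]
  [NormedSpace ℝ F]

lemma exists_pos_add_smul_mem_frontier {Ω : Set E} (hΩo : IsOpen Ω) (hΩb : IsBounded Ω) {x : E}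
    (hx : x ∈ Ω) {v : E} (hv : v ≠ 0) : ∃ t : ℝ, 0 < t ∧ x + t • v ∈ frontier Ω := by
  set ray := (fun t : ℝ => x + t • v) '' Ici 0
  have hray : ¬ ray ⊆ Ω := fun hsub => by
    obtain ⟨C, hC⟩ := hΩb.exists_norm_le
    have hC0 : 0 ≤ C := (norm_nonneg x).trans (hC x hx)
    have hv' : 0 < ‖v‖ := norm_pos_iff.mpr hv
    set t := (C + ‖x‖ + 1) / ‖v‖
    have ht0 : 0 ≤ t := by positivity
    have htv : ‖t • v‖ = C + ‖x‖ + 1 := by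
      rw [norm_smul, Real.norm_of_nonneg ht0, div_mul_cancel₀ _ hv'.ne']
    have hfar := hC _ (hsub ⟨t, ht0, rfl⟩)
    have htri := norm_sub_le (x + t • v) x
    rw [add_sub_cancel_left, htv] at htri
    linarith
  by_contra! hnone
  refine hray ((isPreconnected_Ici.image _ (by fun_prop : Continuous _).continuousOn)
    |>.subset_of_closure_inter_subset hΩo ⟨x, ⟨0, mem_Ici.mpr le_rfl, by simp⟩, hx⟩ ?_)
  rintro _ ⟨hcl, t, ht, rfl⟩
  rcases (mem_Ici.mp ht).eq_or_lt with rfl | ht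
  · simpa using hx
  · by_contra hnot
    exact hnone t ht ⟨hcl, by rwa [hΩo.interior_eq]⟩

lemma mem_segment_add_smul_neg (x w : E) {s t : ℝ} (hs : 0 < s) (ht : 0 < t) :
    x ∈ segment ℝ (x + s • -w) (x + t • w) := by
  have h1 : t / (s + t) + s / (s + t) = 1 := by
    rw [← add_div, add_comm, div_self (by positivity)]
  have h2 : t / (s + t) * s = s / (s + t) * t := by ring
  refine ⟨t / (s + t), s / (s + t), by positivity, by positivity, h1, ?_⟩
  rw [smul_add, smul_add, smul_smul, smul_smul, add_add_add_comm, ← add_smul, h1, one_smul,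
    smul_neg, h2, neg_add_cancel, add_zero]

lemma half_le_dist_map_of_le_dist {ℓ : E →L[ℝ] F} (hℓ : ∀ z, ‖ℓ z‖ ≤ ‖z‖)
    {w : E} (hw : ‖w‖ = 1) (hℓw : ‖ℓ w‖ = 1) {x y : E} {r T : ℝ} (hT : 0 ≤ T)
    (hxy : dist x y < r / 4) (hfar : r ≤ dist (x + T • w) y) :
    r / 2 ≤ dist (ℓ (x + T • w)) (ℓ y) := by
  have h1 : dist (x + T • w) y ≤ T + dist x y := by
    rw [dist_eq_norm, dist_eq_norm, add_sub_right_comm]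
    refine (norm_add_le _ _).trans_eq ?_
    rw [norm_smul, hw, mul_one, Real.norm_of_nonneg hT, add_comm]
  have h2 : T ≤ dist (ℓ (x + T • w)) (ℓ y) + dist x y := by
    have h := norm_sub_le (ℓ (x + T • w) - ℓ y) (ℓ x - ℓ y)
    have e : ℓ (x + T • w) - ℓ y - (ℓ x - ℓ y) = T • ℓ w := by rw [map_add, map_smul]; abel
    rw [e, norm_smul, hℓw, mul_one, Real.norm_of_nonneg hT, ← map_sub ℓ x y] at h
    rw [dist_eq_norm, dist_eq_norm]
    linarith [hℓ (x - y)]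
  linarith

end Lines

theorem memGclass_of_forall_exists_linearIsometry {N j k : ℕ} (hjk : N < j + k) {Ω : Set (Euc N)}
    (hΩo : IsOpen Ω) (hΩb : IsBounded Ω)
    (h : ∀ y ∈ frontier Ω, ∃ (J : Euc k →ₗᵢ[ℝ] Euc N) (ω : Set (Euc k)),
      IsOpen ω ∧ IsBounded ω ∧ ω.Nonempty ∧ StrictlyConvexSet ω ∧
        Ω ⊆ J.toContinuousLinearMap† ⁻¹' ω ∧ y ∈ frontier (J.toContinuousLinearMap† ⁻¹' ω)) :
    MemGclass N j Ω := by
  intro y hy r hr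
  obtain ⟨J, ω, hωo, hωb, -, hωsc, hsub, hfr⟩ := h y hy
  set ℓ := J.toContinuousLinearMap†
  have hclosure : ∀ z ∈ frontier Ω, ℓ z ∈ closure ω := fun z hz =>
    ℓ.continuous.closure_preimage_subset ω (closure_mono hsub hz.1)
  have hℓy : ℓ y ∉ ω := (hωo.frontier_eq ▸ ℓ.continuous.frontier_preimage_subset ω hfr).2
  obtain ⟨δ, hδ, hchord⟩ := hωsc.exists_pos_le_dist_of_mem_segment hωb hℓy (half_pos hr)
  refine ⟨min δ (r / 4), by positivity, ?_⟩
  rintro x ⟨hxy, hxΩ⟩ S hS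
  rw [mem_ball] at hxy
  obtain ⟨v, hvS, hv1, hℓv⟩ := J.exists_norm_adjoint_apply_eq_one (S := S)
    (by rwa [hS, finrank_euclideanSpace_fin, finrank_euclideanSpace_fin])
  refine ⟨v, hvS, hv1, ?_⟩
  by_contra hnone
  have hfar : ∀ t : ℝ, x + t • v ∈ frontier Ω → r ≤ dist (x + t • v) y := fun t ht =>
    not_lt.mp fun hlt => hnone ⟨_, ⟨⟨t, rfl⟩, mem_ball.mpr hlt⟩, ht⟩
  have hne : v ≠ 0 := norm_ne_zero_iff.mp (hv1.symm ▸ one_ne_zero)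
  obtain ⟨T₁, hT₁, hT₁fr⟩ := exists_pos_add_smul_mem_frontier hΩo hΩb hxΩ hne
  obtain ⟨T₂, hT₂, hT₂fr⟩ := exists_pos_add_smul_mem_frontier hΩo hΩb hxΩ (neg_ne_zero.mpr hne)
  have hxy' : dist x y < r / 4 := hxy.trans_le (min_le_right _ _)
  have hb := half_le_dist_map_of_le_dist J.norm_adjoint_apply_le hv1 hℓv hT₁.le hxy'
    (hfar _ hT₁fr)
  have ha := half_le_dist_map_of_le_dist J.norm_adjoint_apply_le (by rwa [norm_neg])
    (by rwa [map_neg, norm_neg]) hT₂.le hxy'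
    (by rw [smul_neg, ← neg_smul] at hT₂fr ⊢; exact hfar _ hT₂fr)
  have hseg : ℓ x ∈ segment ℝ (ℓ (x + T₂ • -v)) (ℓ (x + T₁ • v)) := by
    simpa only [map_add, map_smul, map_neg] using mem_segment_add_smul_neg (ℓ x) (ℓ v) hT₂ hT₁
  have hδle := hchord _ (hclosure _ hT₂fr) _ (hclosure _ hT₁fr) ha hb _ hseg
  have hℓxy : dist (ℓ x) (ℓ y) ≤ dist x y := by
    rw [dist_eq_norm, dist_eq_norm, ← map_sub]
    exact J.norm_adjoint_apply_le _
  linarith [min_le_left δ (r / 4)]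

lemma exists_norm_eq_one_inner_sub_neg {E : Type*} [NormedAddCommGroup E]
    [InnerProductSpace ℝ E] [CompleteSpace E] {Ω : Set E} (hc : Convex ℝ Ω) (ho : IsOpen Ω)
    (hne : Ω.Nonempty) {x : E} (hx : x ∉ Ω) : ∃ n : E, ‖n‖ = 1 ∧ ∀ z ∈ Ω, ⟪z - x, n⟫ < 0 := by
  obtain ⟨f, hf⟩ := geometric_hahn_banach_open_point hc ho hx
  set n₀ := (InnerProductSpace.toDual ℝ E).symm f
  have hn₀ : ∀ z, ⟪n₀, z⟫ = f z := fun z => InnerProductSpace.toDual_symm_apply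
  have hn₀0 : n₀ ≠ 0 := fun h => by
    obtain ⟨a, ha⟩ := hne
    have := hf a ha
    rw [← hn₀, ← hn₀, h, inner_zero_left, inner_zero_left] at this
    exact lt_irrefl _ this
  refine ⟨‖n₀‖⁻¹ • n₀, norm_smul_inv_norm hn₀0, fun z hz => ?_⟩
  rw [real_inner_smul_right, real_inner_comm, hn₀, map_sub]
  exact mul_neg_of_pos_of_neg (by positivity) (sub_neg.mpr (hf z hz))

lemma exists_add_mem_of_mem_intrinsicInterior {E : Type*} [NormedAddCommGroup E]
    [NormedSpace ℝ E] {s : Set E} {y : E} (hy : y ∈ intrinsicInterior ℝ s) :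
    ∃ ε > 0, ∀ w ∈ vectorSpan ℝ s, ‖w‖ < ε → y + w ∈ s := by
  obtain ⟨y', hy', rfl⟩ := mem_intrinsicInterior.mp hy
  obtain ⟨ε, hε, hball⟩ := Metric.isOpen_iff.mp isOpen_interior y' hy'
  refine ⟨ε, hε, fun w hw hwε => ?_⟩
  have hmem := AffineSubspace.vadd_mem_of_mem_direction (s := affineSpan ℝ s) (v := w)
    (by rwa [direction_affineSpan]) y'.2
  have := interior_subset (hball (show (⟨w +ᵥ (y' : E), hmem⟩ : affineSpan ℝ s) ∈ ball y' ε by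
    rw [mem_ball, Subtype.dist_eq, dist_eq_norm]
    simpa [vadd_eq_add] using hwε))
  simpa [vadd_eq_add, add_comm] using this

lemma le_abs_of_add_smul_mem_frontier {E : Type*} [NormedAddCommGroup E] [NormedSpace ℝ E]
    {Ω F : Set E} (hΩc : Convex ℝ Ω) (hF : F ⊆ closure Ω) {y z₀ : E} (hz₀ : z₀ ∈ interior Ω)
    {ε : ℝ} (hball : ∀ w ∈ vectorSpan ℝ F, ‖w‖ < ε → y + w ∈ F) {σ : ℝ} (hσ0 : 0 < σ)
    (hσ1 : σ < 1) {v : E} (hv : v ∈ vectorSpan ℝ F) (hv1 : ‖v‖ = 1) {t : ℝ}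
    (ht : y + σ • (z₀ - y) + t • v ∈ frontier Ω) : (1 - σ) * ε ≤ |t| := by
  by_contra! hlt
  have hw : y + (t / (1 - σ)) • v ∈ F := by
    refine hball _ (Submodule.smul_mem _ _ hv) ?_
    rw [norm_smul, hv1, mul_one, Real.norm_eq_abs, abs_div, abs_of_pos (by linarith : 0 < 1 - σ),
      div_lt_iff₀ (by linarith)]
    linarith
  have hz : y + σ • (z₀ - y) + t • v =
      (y + (t / (1 - σ)) • v) + σ • (z₀ - (y + (t / (1 - σ)) • v)) := by
    have : t • v = (1 - σ) • (t / (1 - σ)) • v := by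
      rw [smul_smul, mul_div_cancel₀ _ (by linarith : (1 : ℝ) - σ ≠ 0)]
    rw [this]
    module
  exact ht.2 (hz ▸ hΩc.add_smul_sub_mem_interior' (hF hw) hz₀ ⟨hσ0, hσ1.le⟩)

theorem finrank_vectorSpan_lt_of_memGclass {N j : ℕ} {Ω : Set (Euc N)} (hG : MemGclass N j Ω)
    (hΩo : IsOpen Ω) (hΩc : Convex ℝ Ω) (hΩne : Ω.Nonempty) {F : Set (Euc N)}
    (hFc : Convex ℝ F) (hFne : F.Nonempty) (hF : F ⊆ frontier Ω) :
    finrank ℝ (vectorSpan ℝ F) < j := by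
  by_contra! hj
  obtain ⟨y, hy⟩ := hFne.intrinsicInterior hFc
  obtain ⟨ε, hε, hball⟩ := exists_add_mem_of_mem_intrinsicInterior hy
  have hyΩ := hF (intrinsicInterior_subset hy)
  obtain ⟨S, -, hSF, hS⟩ := Submodule.exists_le_le_finrank_eq bot_le (by simp) hj
  obtain ⟨z₀, hz₀⟩ := hΩne
  rw [← hΩo.interior_eq] at hz₀
  obtain ⟨δ, hδ, hGδ⟩ := hG y hyΩ (ε / 4) (by positivity)
  have hev : ∀ᶠ σ in 𝓝[>] (0 : ℝ), σ ≤ 1 / 2 ∧ y + σ • (z₀ - y) ∈ ball y (min δ (ε / 4)) := by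
    have hcont : Tendsto (fun σ : ℝ => y + σ • (z₀ - y)) (𝓝[>] 0) (𝓝 y) := by
      have : Continuous fun σ : ℝ => y + σ • (z₀ - y) := by fun_prop
      simpa using (this.tendsto 0).mono_left nhdsWithin_le_nhds
    filter_upwards [Ioc_mem_nhdsGT (by norm_num : (0 : ℝ) < 1 / 2),
      hcont (ball_mem_nhds y (lt_min hδ (by positivity : (0 : ℝ) < ε / 4)))] with σ hσ hσy
    exact ⟨hσ.2, hσy⟩
  obtain ⟨σ, ⟨hσ1, hσy⟩, hσ0 : 0 < σ⟩ := (hev.and self_mem_nhdsWithin).exists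
  rw [mem_ball] at hσy
  have hx' : y + σ • (z₀ - y) ∈ Ω := by
    simpa [hΩo.interior_eq] using hΩc.add_smul_sub_mem_interior' hyΩ.1 hz₀ ⟨hσ0, by linarith⟩
  obtain ⟨v, hvS, hv1, _, ⟨⟨t, rfl⟩, hzy⟩, hzfr⟩ :=
    hGδ _ ⟨mem_ball.mpr (hσy.trans_le (min_le_left _ _)), hx'⟩ S hS
  have ht : |t| < ε / 2 := by
    have h1 := norm_sub_le (y + σ • (z₀ - y) + t • v - y) (y + σ • (z₀ - y) - y)
    rw [sub_sub_sub_cancel_right, add_sub_cancel_left, norm_smul, hv1, mul_one,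
      Real.norm_eq_abs, ← dist_eq_norm, ← dist_eq_norm] at h1
    linarith [mem_ball.mp hzy, hσy.trans_le (min_le_right _ _)]
  have := le_abs_of_add_smul_mem_frontier hΩc (fun z hz => (hF hz).1) hz₀ hball hσ0
    (by linarith) (hSF hvS) hv1 hzfr
  nlinarith

lemma exists_linearIsometry_of_memGclass {N j k : ℕ} (hk : 1 ≤ k) (hjk : j + k ≤ N + 1)
    {Ω : Set (Euc N)} (hG : MemGclass N j Ω) (hΩo : IsOpen Ω) (hΩc : Convex ℝ Ω)
    (hΩne : Ω.Nonempty) {x : Euc N} (hx : x ∈ frontier Ω) {n : Euc N} (hn : n ≠ 0)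
    (hsupp : ∀ z ∈ Ω, ⟪z - x, n⟫ < 0) :
    ∃ J : Euc k →ₗᵢ[ℝ] Euc N, n ∈ LinearMap.range J.toLinearMap ∧
      ∀ z ∈ closure Ω, ⟪z - x, n⟫ = 0 →
        (J.toContinuousLinearMap†) z = (J.toContinuousLinearMap†) x := by
  set F := closure Ω ∩ {z | ⟪z - x, n⟫ = 0}
  have hxF : x ∈ F := ⟨frontier_subset_closure hx, by simp⟩
  have hFc : Convex ℝ F := by
    refine hΩc.closure.inter ?_
    convert (convex_singleton ⟪n, x⟫).linear_preimage (innerSL ℝ n).toLinearMap using 1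
    ext z
    simp [inner_sub_left, sub_eq_zero, real_inner_comm]
  have hFfr : F ⊆ frontier Ω := fun z hz => by
    rw [hΩo.frontier_eq]
    exact ⟨hz.1, fun hzΩ => (hsupp z hzΩ).ne hz.2⟩
  have hdim := finrank_vectorSpan_lt_of_memGclass hG hΩo hΩc hΩne hFc ⟨x, hxF⟩ hFfr
  have hFn : vectorSpan ℝ F ≤ (ℝ ∙ n)ᗮ := by
    rw [vectorSpan_def, Submodule.span_le]
    rintro _ ⟨z₁, hz₁, z₂, hz₂, rfl⟩
    rw [SetLike.mem_coe, Submodule.mem_orthogonal_singleton_iff_inner_right, real_inner_comm]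
    show ⟪z₁ - z₂, n⟫ = 0
    rw [← sub_sub_sub_cancel_right z₁ z₂ x, inner_sub_left, hz₁.2, hz₂.2, sub_self]
  have hnF : ℝ ∙ n ≤ (vectorSpan ℝ F)ᗮ :=
    (Submodule.le_orthogonal_orthogonal _).trans (Submodule.orthogonal_le hFn)
  have hrank := (vectorSpan ℝ F).finrank_add_finrank_orthogonal
  rw [finrank_euclideanSpace_fin] at hrank
  obtain ⟨V, hnV, hVF, hV⟩ := Submodule.exists_le_le_finrank_eq (k := k) hnF
    (by rwa [finrank_span_singleton hn]) (by omega)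
  obtain ⟨J, hJ⟩ := exists_linearIsometry_range_eq V hV
  refine ⟨J, hJ ▸ hnV (Submodule.mem_span_singleton_self n), fun z hz hzn => ?_⟩
  rw [← sub_eq_zero, ← map_sub]
  refine ext_inner_right ℝ fun u => ?_
  rw [ContinuousLinearMap.adjoint_inner_left, inner_zero_left]
  exact Submodule.inner_right_of_mem_orthogonal
    (vsub_mem_vectorSpan ℝ (show z ∈ F from ⟨hz, hzn⟩) hxF)
    (hVF (hJ ▸ LinearMap.mem_range_self _ u))

theorem forall_exists_linearIsometry_of_memGclass {N j k : ℕ} (hk : 1 ≤ k) (hjk : j + k ≤ N + 1)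
    {Ω : Set (Euc N)} (hΩo : IsOpen Ω) (hΩb : IsBounded Ω) (hΩne : Ω.Nonempty)
    (hΩc : Convex ℝ Ω) (hG : MemGclass N j Ω) :
    ∀ x ∈ frontier Ω, ∃ (J : Euc k →ₗᵢ[ℝ] Euc N) (ω : Set (Euc k)),
      IsOpen ω ∧ IsBounded ω ∧ ω.Nonempty ∧ StrictlyConvexSet ω ∧
        Ω ⊆ J.toContinuousLinearMap† ⁻¹' ω ∧ x ∈ frontier (J.toContinuousLinearMap† ⁻¹' ω) := by
  intro x hx
  obtain ⟨n, hn1, hsupp⟩ :=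
    exists_norm_eq_one_inner_sub_neg hΩc hΩo hΩne (hΩo.frontier_eq ▸ hx).2
  obtain ⟨J, ⟨n', rfl⟩, htouch⟩ := exists_linearIsometry_of_memGclass hk hjk hG hΩo hΩc hΩne hx
    (norm_ne_zero_iff.mp (hn1 ▸ one_ne_zero)) hsupp
  exact ⟨J, exists_strictlyConvexSet_preimage hΩb (frontier_subset_closure hx) _
    ((J.norm_map n').symm.trans hn1) (fun z => ContinuousLinearMap.adjoint_inner_left _ _ _)
    hsupp htouch⟩

/-- **Proposition (final section).** For a bounded open convex `Ω ⊆ ℝ^N` and `1 ≤ j ≤ N`,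
`Ω ∈ 𝒢_j` if and only if `Ω ∈ 𝒞_{N-j+1}`. -/
theorem memGclass_iff_memCclass {N j : ℕ} (hj1 : 1 ≤ j) (hjN : j ≤ N)
    (Ω : Set (Euc N)) (hΩo : IsOpen Ω) (hΩb : IsBounded Ω) (hΩne : Ω.Nonempty)
    (hΩc : Convex ℝ Ω) :
    MemGclass N j Ω ↔ MemCclass N (N - j + 1) Ω := by
  rw [memCclass_iff_forall_exists_linearIsometry (by omega)]
  exact ⟨forall_exists_linearIsometry_of_memGclass (by omega) (by omega) hΩo hΩb hΩne hΩc,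
    memGclass_of_forall_exists_linearIsometry (by omega) hΩo hΩb⟩
end
end
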